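/- arXiv:math/0505427 — 7 statements merged into one kernel-verified Lean document; each statement's English description precedes it below -/
import Mathlib

section
/- Let U be an open covering of a metric space Z with L(U) > 0. Then for every s ∈ (0, L(U)) the family U_{−s} = {B_{−s}(U) : U ∈ U} is still an open covering of Z, and its s-multiplicity satisfies m_s(U_{−s}) ≤ m(U). -/
open Set Filter Metric ENNReal

noncomputable section

def famMeshAt {Z : Type*} [MetricSpace Z] (𝒰 : Set (Set Z)) (z : Z) : ℝ≥0∞ :=
  ⨆ U ∈ 𝒰, ⨆ (_ : z ∈ U), EMetric.diam U

/-- Lebesgue number of an open covering at a point. -/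
def famLebAt {Z : Type*} [MetricSpace Z] (𝒰 : Set (Set Z)) (z : Z) : ℝ≥0∞ :=
  min (⨆ U ∈ 𝒰, EMetric.infEdist z Uᶜ) (famMeshAt 𝒰 z)

/-- Lebesgue number of an open covering. -/
def famLeb {Z : Type*} [MetricSpace Z] (𝒰 : Set (Set Z)) : ℝ≥0∞ :=
  ⨅ z : Z, famLebAt 𝒰 z

def IsOpenCover {Z : Type*} [MetricSpace Z] (𝒰 : Set (Set Z)) : Prop :=
  (∀ U ∈ 𝒰, IsOpen U) ∧ ⋃₀ 𝒰 = univ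

/-- The multiplicity of a family of sets, i.e. the maximal number of members with
nonempty common intersection. -/
def famMult {Z : Type*} (𝒰 : Set (Set Z)) : ℕ∞ :=
  ⨆ F ∈ {F : Finset (Set Z) | ↑F ⊆ 𝒰 ∧ (⋂₀ (F : Set (Set Z))).Nonempty}, (F.card : ℕ∞)

/-- `B_{-s}(U)`: the complement of the closed `s`-neighborhood of `Z ∖ U`. -/
def innerBall {Z : Type*} [MetricSpace Z] (s : ℝ) (U : Set Z) : Set Z :=
  {z | ENNReal.ofReal s < EMetric.infEdist z Uᶜ}

lemma thickening_innerBall_subset {Z : Type*} [MetricSpace Z] (s : ℝ) (U : Set Z) :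
    Metric.thickening s (innerBall s U) ⊆ U := by
  intro z hz
  rw [Metric.mem_thickening_iff_infEdist_lt] at hz
  rw [EMetric.infEdist_lt_iff] at hz
  obtain ⟨y, hy, hzy⟩ := hz
  by_contra hzU
  have h1 : EMetric.infEdist y Uᶜ ≤ edist y z := EMetric.infEdist_le_edist_of_mem hzU
  have h2 : ENNReal.ofReal s < EMetric.infEdist y Uᶜ := hy
  rw [edist_comm] at hzy
  exact absurd (h2.trans_le h1) (not_lt.2 hzy.le)

lemma famMult_image_le {Z : Type*} (𝒰 : Set (Set Z)) (g : Set Z → Set Z)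
    (hg : ∀ U ∈ 𝒰, g U ⊆ U) : famMult (g '' 𝒰) ≤ famMult 𝒰 := by
  classical
  apply iSup₂_le
  rintro F ⟨hF, x, hx⟩
  let f : Set Z → Set Z := fun V => if h : ∃ U ∈ 𝒰, g U = V then h.choose else ∅
  have hf : ∀ V ∈ F, f V ∈ 𝒰 ∧ g (f V) = V := by
    intro V hV
    obtain ⟨U, hU, hgu⟩ := hF hV
    have h : ∃ U ∈ 𝒰, g U = V := ⟨U, hU, hgu⟩
    simp only [f, dif_pos h]
    exact ⟨h.choose_spec.1, h.choose_spec.2⟩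
  have hinj : Set.InjOn f F := by
    intro V₁ h₁ V₂ h₂ he
    rw [← (hf V₁ h₁).2, ← (hf V₂ h₂).2, he]
  have hcard : (F.image f).card = F.card := Finset.card_image_of_injOn hinj
  have hmem : (F.image f : Finset (Set Z)) ∈
      {F : Finset (Set Z) | ↑F ⊆ 𝒰 ∧ (⋂₀ (F : Set (Set Z))).Nonempty} := by
    constructor
    · intro U hU
      simp only [Finset.coe_image, mem_image, Finset.mem_coe] at hU
      obtain ⟨V, hV, rfl⟩ := hU
      exact (hf V hV).1
    · refine ⟨x, ?_⟩
      rintro U hU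
      simp only [Finset.coe_image, mem_image, Finset.mem_coe] at hU
      obtain ⟨V, hV, rfl⟩ := hU
      have hxV : x ∈ V := hx V hV
      rw [← (hf V hV).2] at hxV
      exact hg _ (hf V hV).1 hxV
  calc (F.card : ℕ∞) = ((F.image f).card : ℕ∞) := by rw [hcard]
    _ ≤ famMult 𝒰 := le_iSup₂ (f := fun F _ => (F.card : ℕ∞)) (F.image f) hmem

/-- **Lemma 2.1.** Let `𝒰` be an open covering of `Z` with `L(𝒰) > 0`. Then for every
`s ∈ (0, L(𝒰))` the family `𝒰₋ₛ = B₋ₛ(𝒰)` is still an open covering of `Z`, and its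
`s`-multiplicity satisfies `m_s(𝒰₋ₛ) ≤ m(𝒰)`. -/
theorem innerBall_openCover_and_mult_le
    {Z : Type*} [MetricSpace Z] (𝒰 : Set (Set Z)) (h𝒰 : IsOpenCover 𝒰)
    (hL : 0 < famLeb 𝒰) (s : ℝ) (hs : 0 < s) (hsL : ENNReal.ofReal s < famLeb 𝒰) :
    IsOpenCover (innerBall s '' 𝒰) ∧
      famMult (Metric.thickening s '' (innerBall s '' 𝒰)) ≤ famMult 𝒰 := by
  constructor
  · constructor
    · rintro V ⟨U, -, rfl⟩
      exact isOpen_Ioi.preimage (EMetric.continuous_infEdist)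
    · apply eq_univ_of_forall
      intro z
      have h1 : ENNReal.ofReal s < famLebAt 𝒰 z := hsL.trans_le (iInf_le _ z)
      have h2 : ENNReal.ofReal s < ⨆ U ∈ 𝒰, EMetric.infEdist z Uᶜ :=
        h1.trans_le (min_le_left _ _)
      rw [lt_iSup_iff] at h2
      obtain ⟨U, hU⟩ := h2
      rw [lt_iSup_iff] at hU
      obtain ⟨hU𝒰, hlt⟩ := hU
      exact ⟨innerBall s U, ⟨U, hU𝒰, rfl⟩, hlt⟩
  · rw [← image_comp]
    exact famMult_image_le 𝒰 _ fun U _ => thickening_innerBall_subset s U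
end
end

section
/- Let U = {U_j}_{j∈J} be a locally finite open covering of a metric space Z by bounded sets with Lebesgue number L(U) ≥ d > 0 and finite multiplicity m(U) = m + 1. Then the barycentric map p: Z → N(U) ⊂ Δ^J associated with U is Lipschitz with Lipschitz constant Lip(p) ≤ (m+2)²/d, and for each vertex v of the nerve N(U) the preimage p⁻¹(st_v) of its open star coincides with the member of U corresponding to v. -/
open Set Filter Metric ENNReal

noncomputable section

universe u v

/-- `q_j(z) = min {diam Z, dist(z, Z∖U_j)}`. -/
def baryWeight {Z : Type u} [MetricSpace Z] {J : Type v} (U : J → Set Z) (j : J) (z : Z) : ℝ :=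
  (min (EMetric.diam (univ : Set Z)) (EMetric.infEdist z (U j)ᶜ)).toReal

/-- The barycentric map `p : Z → N(𝒰) ⊂ Δ^J` associated with the covering `U`,
given by its coordinate functions `p_j(z) = q_j(z)/∑_i q_i(z)`. -/
def baryMap {Z : Type u} [MetricSpace Z] {J : Type v} (U : J → Set Z) (z : Z) (j : J) : ℝ :=
  baryWeight U j z / ∑ᶠ i, baryWeight U i z

set_option maxHeartbeats 1000000 in
/-- **Barycentric maps** (Sect. 2.3). If `𝒰 = {U_j}` is a locally finite open covering of a
metric space `Z` by bounded sets, with Lebesgue number `L(𝒰) ≥ d > 0` and multiplicity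
`m(𝒰) = m + 1 < ∞`, then the barycentric map `p : Z → N(𝒰) ⊂ Δ^J` is Lipschitz with
constant `(m+2)²/d` (with respect to the `ℓ²` metric on `Δ^J`), and for each vertex `v`
of the nerve the preimage of its open star is the corresponding member of the covering. -/
theorem baryMap_lipschitz_and_star_preimage
    {Z : Type u} [MetricSpace Z] {J : Type v} (U : J → Set Z)
    (hopen : ∀ j, IsOpen (U j)) (hcover : ⋃ j, U j = univ)
    (hbdd : ∀ j, Bornology.IsBounded (U j)) (hinj : Function.Injective U)
    (hlf : LocallyFinite U)
    (d : ℝ) (hd : 0 < d) (hLeb : ENNReal.ofReal d ≤ famLeb (Set.range U))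
    (m : ℕ) (hmult : famMult (Set.range U) = ((m : ℕ∞) + 1)) :
    (∀ z z' : Z,
      Real.sqrt (∑' j, (baryMap U z j - baryMap U z' j) ^ 2)
        ≤ ((m + 2 : ℝ) ^ 2 / d) * dist z z') ∧
    (∀ j, {z : Z | 0 < baryMap U z j} = U j) := by
  classical
  set D := EMetric.diam (univ : Set Z) with hDdef
  -- finiteness of the set of indices containing a point
  have hfinS : ∀ z : Z, {j | z ∈ U j}.Finite := by
    intro z
    obtain ⟨t, ht, hfin⟩ := hlf z
    exact hfin.subset fun j hj => ⟨z, hj, mem_of_mem_nhds ht⟩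
  -- the ennreal weight is never ⊤
  have hwne : ∀ (j : J) (z : Z), min D (EMetric.infEdist z (U j)ᶜ) ≠ ⊤ := by
    intro j z h
    rw [min_eq_top] at h
    rcases eq_empty_or_nonempty ((U j)ᶜ) with he | hne
    · rw [compl_empty_iff] at he
      exact (hbdd j).ediam_ne_top (by rw [he]; exact h.1)
    · exact Metric.infEdist_ne_top hne h.2
  have hqnn : ∀ (j : J) (z : Z), 0 ≤ baryWeight U j z := fun j z => ENNReal.toReal_nonneg
  have hq0 : ∀ (j : J) (z : Z), z ∉ U j → baryWeight U j z = 0 := by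
    intro j z hz
    have h0 : EMetric.infEdist z (U j)ᶜ = 0 := EMetric.infEdist_zero_of_mem hz
    rw [baryWeight, h0, min_eq_right (show (0:ℝ≥0∞) ≤ D from zero_le), ENNReal.toReal_zero]
  have hsupp : ∀ z : Z, (Function.support fun i => baryWeight U i z).Finite := by
    intro z
    refine (hfinS z).subset fun j hj => ?_
    by_contra h
    exact hj (hq0 j z h)
  -- Lebesgue number facts at each point
  have hLz : ∀ z : Z, ENNReal.ofReal d ≤ (⨆ j, EMetric.infEdist z (U j)ᶜ) ∧
      ENNReal.ofReal d ≤ famMeshAt (Set.range U) z := by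
    intro z
    have h := le_trans hLeb (iInf_le (fun z => famLebAt (Set.range U) z) z)
    rw [famLebAt, le_min_iff] at h
    refine ⟨?_, h.2⟩
    have := h.1
    rwa [iSup_range (g := fun V => EMetric.infEdist z Vᶜ) (f := U)] at this
  have hDd : ∀ _ : Z, ENNReal.ofReal d ≤ D := by
    intro z
    refine le_trans (hLz z).2 ?_
    exact iSup₂_le fun V _ => iSup_le fun _ => EMetric.diam_mono (subset_univ V)
  -- existence of a big weight
  have hbig : ∀ z : Z, ∃ j0, ENNReal.ofReal d ≤ min D (EMetric.infEdist z (U j0)ᶜ) := by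
    intro z
    have hzU : ∃ j, z ∈ U j := by
      have : z ∈ ⋃ j, U j := by rw [hcover]; trivial
      exact mem_iUnion.mp this
    obtain ⟨j1, hj1⟩ := hzU
    have hne : ((hfinS z).toFinset).Nonempty := ⟨j1, by simpa using hj1⟩
    obtain ⟨j0, _, hj0max⟩ := Finset.exists_max_image ((hfinS z).toFinset)
      (fun j => EMetric.infEdist z (U j)ᶜ) hne
    refine ⟨j0, le_min (hDd z) ?_⟩
    refine le_trans (hLz z).1 (iSup_le fun j => ?_)
    by_cases hz : z ∈ U j
    · exact hj0max j (by simpa using hz)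
    · rw [show EMetric.infEdist z (U j)ᶜ = 0 from EMetric.infEdist_zero_of_mem (show z ∈ (U j)ᶜ from hz)]
      exact zero_le
  have hσ : ∀ z : Z, d ≤ ∑ᶠ i, baryWeight U i z := by
    intro z
    obtain ⟨j0, hj0⟩ := hbig z
    have h1 : d ≤ baryWeight U j0 z := by
      have := ENNReal.toReal_mono (hwne j0 z) hj0
      rwa [ENNReal.toReal_ofReal hd.le] at this
    exact le_trans h1 (single_le_finsum j0 (hsupp z) (fun j => hqnn j z))
  -- cardinality bound from multiplicity
  have hcard : ∀ (z : Z) (s : Finset J), (∀ j ∈ s, z ∈ U j) → s.card ≤ m + 1 := by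
    intro z s hs
    have hF1 : ↑(s.image U) ⊆ Set.range U := by
      intro V hV
      simp only [Finset.coe_image, mem_image] at hV
      obtain ⟨j, _, rfl⟩ := hV
      exact mem_range_self j
    have hF2 : (⋂₀ ((s.image U : Finset (Set Z)) : Set (Set Z))).Nonempty := by
      refine ⟨z, ?_⟩
      rw [mem_sInter]
      intro V hV
      simp only [Finset.coe_image, mem_image, Finset.mem_coe] at hV
      obtain ⟨j, hj, rfl⟩ := hV
      exact hs j hj
    have hmem : (s.image U) ∈ {F : Finset (Set Z) |
        ↑F ⊆ Set.range U ∧ (⋂₀ (F : Set (Set Z))).Nonempty} := ⟨hF1, hF2⟩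
    have hle : ((s.image U).card : ℕ∞) ≤ famMult (Set.range U) :=
      le_biSup (fun (F : Finset (Set Z)) => (F.card : ℕ∞)) hmem
    rw [hmult, Finset.card_image_of_injective s hinj] at hle
    exact_mod_cast hle
  -- 1-Lipschitz property of the weights
  have hq_lip : ∀ (j : J) (z z' : Z), |baryWeight U j z - baryWeight U j z'| ≤ dist z z' := by
    have key : ∀ (j : J) (z z' : Z),
        baryWeight U j z - baryWeight U j z' ≤ dist z z' := by
      intro j z z'
      have h1 : min D (EMetric.infEdist z (U j)ᶜ)
          ≤ min D (EMetric.infEdist z' (U j)ᶜ) + edist z z' := by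
        refine le_trans (min_le_min le_rfl (EMetric.infEdist_le_infEdist_add_edist (x := z) (y := z') (s := (U j)ᶜ))) ?_
        rcases le_total D (EMetric.infEdist z' (U j)ᶜ) with h | h
        · rw [min_eq_left h]
          exact le_add_right (min_le_left _ _)
        · rw [min_eq_right h]
          exact min_le_right _ _
      have h2 := ENNReal.toReal_mono
        (ENNReal.add_ne_top.mpr ⟨hwne j z', edist_ne_top z z'⟩) h1
      rw [ENNReal.toReal_add (hwne j z') (edist_ne_top z z')] at h2
      have h3 : (edist z z').toReal = dist z z' := (dist_edist z z').symm
      rw [baryWeight, baryWeight]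
      rw [h3] at h2
      linarith [h2]
    intro j z z'
    rw [abs_sub_le_iff]
    constructor
    · exact key j z z'
    · rw [dist_comm]; exact key j z' z
  -- sums are positive
  have hσpos : ∀ z : Z, 0 < ∑ᶠ i, baryWeight U i z := fun z => lt_of_lt_of_le hd (hσ z)
  constructor
  · -- Lipschitz estimate
    intro z z'
    set ρ := dist z z' with hρdef
    have hρnn : 0 ≤ ρ := dist_nonneg
    set σ := ∑ᶠ i, baryWeight U i z with hσdef
    set σ' := ∑ᶠ i, baryWeight U i z' with hσ'def
    set T : Finset J := (hfinS z).toFinset ∪ (hfinS z').toFinset with hTdef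
    have hTz : ∀ j, j ∉ T → z ∉ U j ∧ z' ∉ U j := by
      intro j hj
      simp only [hTdef, Finset.mem_union, Set.Finite.mem_toFinset, mem_setOf_eq, not_or] at hj
      exact hj
    have hsubT : (Function.support fun i => baryWeight U i z) ⊆ ↑T := by
      intro j hj
      by_contra h
      exact hj (hq0 j z (hTz j h).1)
    have hsubT' : (Function.support fun i => baryWeight U i z') ⊆ ↑T := by
      intro j hj
      by_contra h
      exact hj (hq0 j z' (hTz j h).2)
    have hσsum : σ = ∑ j ∈ T, baryWeight U j z :=
      finsum_eq_sum_of_support_subset _ hsubT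
    have hσ'sum : σ' = ∑ j ∈ T, baryWeight U j z' :=
      finsum_eq_sum_of_support_subset _ hsubT'
    set n : ℝ := (T.card : ℝ) with hndef
    have hnle : n ≤ 2 * (m : ℝ) + 2 := by
      have h1 : T.card ≤ ((hfinS z).toFinset).card + ((hfinS z').toFinset).card :=
        Finset.card_union_le _ _
      have h2 : ((hfinS z).toFinset).card ≤ m + 1 :=
        hcard z _ (fun j hj => by simpa using hj)
      have h3 : ((hfinS z').toFinset).card ≤ m + 1 :=
        hcard z' _ (fun j hj => by simpa using hj)
      have : T.card ≤ 2 * m + 2 := by omega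
      rw [hndef]
      push_cast
      exact_mod_cast this
    have hnnn : 0 ≤ n := Nat.cast_nonneg _
    -- |σ - σ'| ≤ n * ρ
    have hσdiff : |σ - σ'| ≤ n * ρ := by
      rw [hσsum, hσ'sum, ← Finset.sum_sub_distrib]
      refine le_trans (Finset.abs_sum_le_sum_abs _ _) ?_
      rw [hndef]
      calc ∑ j ∈ T, |baryWeight U j z - baryWeight U j z'| ≤ ∑ _j ∈ T, ρ :=
            Finset.sum_le_sum fun j _ => hq_lip j z z'
        _ = (T.card : ℝ) * ρ := by rw [Finset.sum_const, nsmul_eq_mul]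
    -- coordinates of the barycentric maps
    have hp'le : ∀ j, baryMap U z' j ≤ 1 := by
      intro j
      rw [baryMap, div_le_one (hσpos z')]
      exact single_le_finsum j (hsupp z') (fun i => hqnn i z')
    have hp'nn : ∀ j, 0 ≤ baryMap U z' j := fun j =>
      div_nonneg (hqnn j z') (hσpos z').le
    have hp'sum : ∑ j ∈ T, baryMap U z' j = 1 := by
      simp only [baryMap, ← hσ'def]
      rw [← Finset.sum_div, ← hσ'sum, div_self (hσpos z').ne']
    -- pointwise bound
    have hkey : ∀ j ∈ T, |baryMap U z j - baryMap U z' j|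
        ≤ ρ / d + baryMap U z' j * (n * ρ / d) := by
      intro j _
      have hσd := hσ z
      have hσ'd := hσ z'
      have hσne : σ ≠ 0 := by rw [hσdef]; exact (hσpos z).ne'
      have hσ'ne : σ' ≠ 0 := by rw [hσ'def]; exact (hσpos z').ne'
      have heq : baryMap U z j - baryMap U z' j
          = (baryWeight U j z - baryWeight U j z') / σ
            + (baryWeight U j z' / σ') * ((σ' - σ) / σ) := by
        rw [baryMap, baryMap, ← hσdef, ← hσ'def]
        field_simp
        ring
      rw [heq]
      have hb1 : |(baryWeight U j z - baryWeight U j z') / σ| ≤ ρ / d := by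
        rw [abs_div, abs_of_pos (hσpos z)]
        exact div_le_div₀ (hρnn) (hq_lip j z z') hd hσd
      have hb2 : |(baryWeight U j z' / σ') * ((σ' - σ) / σ)|
          ≤ baryMap U z' j * (n * ρ / d) := by
        rw [abs_mul, abs_div, abs_of_pos (hσpos z'), abs_div, abs_of_pos (hσpos z)]
        have h1 : |baryWeight U j z'| = baryWeight U j z' := abs_of_nonneg (hqnn j z')
        rw [h1]
        refine mul_le_mul le_rfl ?_ (div_nonneg (abs_nonneg _) (le_of_lt (hσpos z))) (hp'nn j)
        have : |σ' - σ| ≤ n * ρ := by rw [abs_sub_comm]; exact hσdiff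
        exact div_le_div₀ (mul_nonneg hnnn hρnn) this hd hσd
      calc |(baryWeight U j z - baryWeight U j z') / σ
            + (baryWeight U j z' / σ') * ((σ' - σ) / σ)|
          ≤ |(baryWeight U j z - baryWeight U j z') / σ|
            + |(baryWeight U j z' / σ') * ((σ' - σ) / σ)| := abs_add_le _ _
        _ ≤ ρ / d + baryMap U z' j * (n * ρ / d) := add_le_add hb1 hb2
    -- reduce tsum to finite sum
    have htsum : (∑' j, (baryMap U z j - baryMap U z' j) ^ 2)
        = ∑ j ∈ T, (baryMap U z j - baryMap U z' j) ^ 2 := by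
      refine tsum_eq_sum ?_
      intro j hj
      have h := hTz j hj
      have h1 : baryWeight U j z = 0 := hq0 j z h.1
      have h2 : baryWeight U j z' = 0 := hq0 j z' h.2
      rw [baryMap, baryMap, h1, h2, zero_div, zero_div, sub_zero]
      norm_num
    rw [htsum]
    set a := ρ / d with hadef
    set b := n * ρ / d with hbdef
    have hann : 0 ≤ a := by positivity
    have hbnn : 0 ≤ b := by positivity
    have hsq : ∀ j ∈ T, (baryMap U z j - baryMap U z' j) ^ 2
        ≤ (a + baryMap U z' j * b) ^ 2 := by
      intro j hj
      rw [← sq_abs]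
      refine pow_le_pow_left₀ (abs_nonneg _) ?_ 2
      exact hkey j hj
    have hsum2 : ∑ j ∈ T, (baryMap U z j - baryMap U z' j) ^ 2
        ≤ n * a ^ 2 + 2 * a * b + b ^ 2 := by
      refine le_trans (Finset.sum_le_sum hsq) ?_
      have expand : ∀ j ∈ T, (a + baryMap U z' j * b) ^ 2
          = a ^ 2 + 2 * a * b * baryMap U z' j + b ^ 2 * (baryMap U z' j) ^ 2 := by
        intro j _; ring
      rw [Finset.sum_congr rfl expand]
      rw [Finset.sum_add_distrib, Finset.sum_add_distrib, Finset.sum_const, nsmul_eq_mul]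
      have e1 : ∑ j ∈ T, 2 * a * b * baryMap U z' j = 2 * a * b := by
        rw [← Finset.mul_sum, hp'sum, mul_one]
      have e2 : ∑ j ∈ T, b ^ 2 * (baryMap U z' j) ^ 2 ≤ b ^ 2 := by
        rw [← Finset.mul_sum]
        have : ∑ j ∈ T, (baryMap U z' j) ^ 2 ≤ 1 := by
          rw [← hp'sum]
          refine Finset.sum_le_sum fun j _ => ?_
          have := hp'le j
          have := hp'nn j
          nlinarith
        nlinarith [sq_nonneg b]
      rw [e1]
      rw [hndef]
      linarith [e2]
    have hK : n * a ^ 2 + 2 * a * b + b ^ 2 ≤ (((m : ℝ) + 2) ^ 2 / d * ρ) ^ 2 := by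
      rw [hadef, hbdef]
      have hM : (0:ℝ) ≤ (m : ℝ) := Nat.cast_nonneg _
      have h1 : (((m : ℝ) + 2) ^ 2 / d * ρ) ^ 2 = ((m:ℝ)+2)^4 * (ρ/d)^2 := by
        field_simp
      have h2 : n * (ρ/d) ^ 2 + 2 * (ρ/d) * (n * ρ / d) + (n * ρ / d) ^ 2
          = (n^2 + 3*n) * (ρ/d)^2 := by field_simp; ring
      rw [h1, h2]
      have h3 : n^2 + 3*n ≤ ((m:ℝ)+2)^4 := by
        have h5 : n^2 ≤ (2*(m:ℝ)+2)^2 := by nlinarith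
        nlinarith [h5, hnle, hM, sq_nonneg ((m:ℝ)), pow_nonneg hM 3, pow_nonneg hM 4]
      have h4 : (0:ℝ) ≤ (ρ/d)^2 := by positivity
      nlinarith
    refine le_trans (Real.sqrt_le_sqrt (le_trans hsum2 hK)) ?_
    rw [Real.sqrt_sq (by positivity)]
  · -- preimage of the star
    intro j
    ext z
    simp only [mem_setOf_eq]
    constructor
    · intro h
      by_contra hz
      rw [baryMap, hq0 j z hz, zero_div] at h
      exact lt_irrefl 0 h
    · intro hz
      rw [baryMap]
      refine div_pos ?_ (hσpos z)
      rw [baryWeight]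
      refine ENNReal.toReal_pos ?_ (hwne j z)
      rw [← pos_iff_ne_zero, lt_min_iff]
      constructor
      · exact lt_of_lt_of_le (by simpa using hd) (hDd z)
      · rw [pos_iff_ne_zero]
        intro h0
        have : z ∈ closure ((U j)ᶜ) := EMetric.mem_closure_iff_infEdist_zero.mpr h0
        rw [(hopen j).isClosed_compl.closure_eq] at this
        exact this hz
end
end

section
/- Let U and Û be separated families of subsets in a space X such that no member of Û intersects two disjoint members of U. Then the family V = (U ∗ Û) ∪ Û is separated; moreover, if U is disjoint then U ∗ Û is also disjoint. -/
open Set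

/-- A family of sets is separated if any two different members are either disjoint
or one of them is contained in the other. -/
def SeparatedFam {X : Type*} (𝒰 : Set (Set X)) : Prop :=
  ∀ U ∈ 𝒰, ∀ V ∈ 𝒰, Disjoint U V ∨ U ⊆ V ∨ V ⊆ U

/-- `𝒰 ∗ 𝒱`: for every `U ∈ 𝒰` take the union of `U` and all members of `𝒱`
meeting `U`. -/
def starFam {X : Type*} (𝒰 𝒱 : Set (Set X)) : Set (Set X) :=
  (fun U => U ∪ ⋃₀ {V | V ∈ 𝒱 ∧ (V ∩ U).Nonempty}) '' 𝒰

/-- **Lemma 4.3.** Let `𝒰`, `𝒱` be separated families in `X` such that no member of `𝒱`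
intersects two disjoint members of `𝒰`. Then the family `(𝒰 ∗ 𝒱) ∪ 𝒱` is separated;
moreover, if `𝒰` is disjoint then `𝒰 ∗ 𝒱` is also disjoint. -/
theorem starFam_separated {X : Type*} (𝒰 𝒱 : Set (Set X))
    (h𝒰 : SeparatedFam 𝒰) (h𝒱 : SeparatedFam 𝒱)
    (hno : ∀ V ∈ 𝒱, ∀ U ∈ 𝒰, ∀ U' ∈ 𝒰, Disjoint U U' →
      (V ∩ U).Nonempty → (V ∩ U').Nonempty → False) :
    SeparatedFam (starFam 𝒰 𝒱 ∪ 𝒱) ∧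
      (𝒰.Pairwise Disjoint → (starFam 𝒰 𝒱).Pairwise Disjoint) := by
  classical
  set f : Set X → Set X := fun U => U ∪ ⋃₀ {V | V ∈ 𝒱 ∧ (V ∩ U).Nonempty} with hf
  -- disjoint members of 𝒰 have disjoint stars
  have key : ∀ U ∈ 𝒰, ∀ U' ∈ 𝒰, Disjoint U U' → Disjoint (f U) (f U') := by
    intro U hU U' hU' hd
    rw [hf]
    simp only
    rw [disjoint_union_left]
    constructor
    · rw [disjoint_union_right]
      refine ⟨hd, ?_⟩
      rw [disjoint_sUnion_right]
      rintro V ⟨hV, hVU'⟩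
      by_contra h
      rw [not_disjoint_iff_nonempty_inter] at h
      exact hno V hV U hU U' hU' hd (by rwa [inter_comm]) hVU'
    · rw [disjoint_sUnion_left]
      rintro V ⟨hV, hVU⟩
      rw [disjoint_union_right]
      constructor
      · by_contra h
        rw [not_disjoint_iff_nonempty_inter] at h
        exact hno V hV U hU U' hU' hd hVU h
      · rw [disjoint_sUnion_right]
        rintro V' ⟨hV', hV'U'⟩
        rcases h𝒱 V hV V' hV' with h | h | h
        · exact h
        · obtain ⟨x, hxV, hxU⟩ := hVU
          exact absurd (hno V' hV' U hU U' hU' hd ⟨x, h hxV, hxU⟩ hV'U') (fun t => t)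
        · obtain ⟨x, hxV', hxU'⟩ := hV'U'
          exact absurd (hno V hV U hU U' hU' hd hVU ⟨x, h hxV', hxU'⟩) (fun t => t)
  -- monotonicity
  have mono : ∀ U U' : Set X, U ⊆ U' → f U ⊆ f U' := by
    intro U U' hUU'
    apply union_subset_union hUU'
    apply sUnion_mono
    rintro V ⟨hV, x, hxV, hxU⟩
    exact ⟨hV, x, hxV, hUU' hxU⟩
  -- star vs member of 𝒱
  have aux : ∀ U ∈ 𝒰, ∀ V ∈ 𝒱, Disjoint (f U) V ∨ V ⊆ f U := by
    intro U hU V hV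
    by_cases hVU : (V ∩ U).Nonempty
    · exact Or.inr ((subset_sUnion_of_mem (show V ∈ {W | W ∈ 𝒱 ∧ (W ∩ U).Nonempty} from ⟨hV, hVU⟩)).trans subset_union_right)
    · by_cases hsub : ∃ V' ∈ 𝒱, (V' ∩ U).Nonempty ∧ V ⊆ V'
      · obtain ⟨V', hV', hV'U, hVV'⟩ := hsub
        exact Or.inr (hVV'.trans ((subset_sUnion_of_mem
          (show V' ∈ {W | W ∈ 𝒱 ∧ (W ∩ U).Nonempty} from ⟨hV', hV'U⟩)).trans
          subset_union_right))
      · push_neg at hsub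
        left
        rw [hf]
        simp only
        rw [disjoint_union_left]
        constructor
        · rw [not_nonempty_iff_eq_empty] at hVU
          exact disjoint_iff_inter_eq_empty.mpr (by rwa [inter_comm])
        · rw [disjoint_sUnion_left]
          rintro V' ⟨hV', hV'U⟩
          rcases h𝒱 V' hV' V hV with h | h | h
          · exact h
          · -- V' ⊆ V : then V meets U, contradiction
            obtain ⟨x, hxV', hxU⟩ := hV'U
            exact absurd ⟨x, h hxV', hxU⟩ hVU
          · exact absurd h (hsub V' hV' hV'U)
  constructor
  · rintro A hA B hB
    rcases hA with ⟨U, hU, rfl⟩ | hA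
    · rcases hB with ⟨U', hU', rfl⟩ | hB
      · rcases h𝒰 U hU U' hU' with h | h | h
        · exact Or.inl (key U hU U' hU' h)
        · exact Or.inr (Or.inl (mono U U' h))
        · exact Or.inr (Or.inr (mono U' U h))
      · rcases aux U hU B hB with h | h
        · exact Or.inl h
        · exact Or.inr (Or.inr h)
    · rcases hB with ⟨U', hU', rfl⟩ | hB
      · rcases aux U' hU' A hA with h | h
        · exact Or.inl h.symm
        · exact Or.inr (Or.inl h)
      · exact h𝒱 A hA B hB
  · intro hdisj
    rintro A ⟨U, hU, rfl⟩ B ⟨U', hU', rfl⟩ hne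
    have hUU' : U ≠ U' := by rintro rfl; exact hne rfl
    exact key U hU U' hU' (hdisj hU hU' hUU')
end

section
/- Suppose that X is a metric space with finite capacity dimension, cdim X ≤ n. Then there are positive constants c₀, δ and r₀ > 0 such that for every r ∈ (0, r₀) there exists a sequence of open coverings U_j of X, j ∈ ℕ, with the following properties: (i) for every j, the covering U_j is (n+1)-colored by one and the same color set A of cardinality n+1, U_j = ∪_{a∈A} U_j^a; (ii) for every j, δ r^j ≤ mesh(U_j) ≤ r^j and L(U_j) ≥ c₀·mesh(U_j); (iii) for every i > j, the covering U_i is inscribed in U_j; (iv) for every a ∈ A, the union U^a = ∪_{j∈ℕ} U_j^a is separated. -/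
open Set Filter Metric ENNReal

noncomputable section

def famMesh {Z : Type*} [MetricSpace Z] (𝒰 : Set (Set Z)) : ℝ≥0∞ :=
  ⨆ U ∈ 𝒰, EMetric.diam U

def famCap {Z : Type*} [MetricSpace Z] (𝒰 : Set (Set Z)) : ℝ≥0∞ :=
  if famMesh 𝒰 = 0 ∨ (famLeb 𝒰 = ⊤ ∧ famMesh 𝒰 = ⊤) then 1 else famLeb 𝒰 / famMesh 𝒰

/-- A covering is `k`-colored if it is the union of `k` disjoint families. -/
def IsColored {Z : Type*} (𝒰 : Set (Set Z)) (k : ℕ) : Prop :=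
  ∃ 𝒱 : Fin k → Set (Set Z), 𝒰 = ⋃ a, 𝒱 a ∧ ∀ a, (𝒱 a).Pairwise Disjoint

def c1tau (Z : Type*) [MetricSpace Z] (m : ℕ) (δ τ : ℝ) : ℝ≥0∞ :=
  ⨆ (𝒰 : Set (Set Z)) (_ : IsOpenCover 𝒰 ∧ IsColored 𝒰 (m + 1) ∧
    ENNReal.ofReal (δ * τ) ≤ famMesh 𝒰 ∧ famMesh 𝒰 ≤ ENNReal.ofReal τ), famCap 𝒰

def c1delta (Z : Type*) [MetricSpace Z] (m : ℕ) (δ : ℝ) : ℝ≥0∞ :=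
  Filter.liminf (fun τ => c1tau Z m δ τ) (nhdsWithin 0 (Set.Ioi 0))

def c1 (Z : Type*) [MetricSpace Z] (m : ℕ) : ℝ≥0∞ :=
  ⨆ δ ∈ Set.Ioo (0 : ℝ) 1, c1delta Z m δ

/-- The capacity dimension (first definition, via colored coverings). -/
def cdim (Z : Type*) [MetricSpace Z] : ℕ∞ :=
  ⨅ (m : ℕ) (_ : 0 < c1 Z m), (m : ℕ∞)

namespace Prop44

open EMetric

variable {X : Type*} [MetricSpace X]

lemma mem_of_edist_lt {S : Set X} {x y : X} {c : ℝ≥0∞}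
    (hx : c ≤ infEdist x Sᶜ) (hy : edist x y < c) : y ∈ S := by
  by_contra hyS
  exact absurd (le_trans hx (infEdist_le_edist_of_mem hyS)) (not_le.mpr hy)

section Machinery

variable {m : ℕ}

abbrev Idx (X : Type*) (m : ℕ) := ℕ × Fin (m+1) × Set X

variable (K : ℕ → Fin (m+1) → Set (Set X)) (t g : ℕ → ℝ)

def Good (i : Idx X m) : Prop := i.2.2 ∈ K i.1 i.2.1

def sh (i : Idx X m) : Set X := {x | ENNReal.ofReal (t i.1) < infEdist x i.2.2ᶜ}

lemma sh_open (i : Idx X m) : IsOpen (sh t i) :=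
  isOpen_lt continuous_const continuous_infEdist

lemma sh_subset (i : Idx X m) : sh t i ⊆ i.2.2 := by
  intro x hx
  by_contra hxU
  have h0 : infEdist x i.2.2ᶜ = 0 := infEdist_zero_of_mem hxU
  simp only [sh, mem_setOf_eq, h0] at hx
  exact absurd hx (by simp)

def Cand (i : Idx X m) (l : ℕ) : Prop :=
  l < i.1 ∧ ∃ V ∈ K l i.2.1, ∃ p ∈ sh t i, ∃ v ∈ sh t (l, i.2.1, V),
    edist p v ≤ ENNReal.ofReal (g l)

open scoped Classical in
noncomputable def parent (i : Idx X m) : Option (Idx X m) :=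
  if h : ∃ l, Cand K t g i l then
    some ⟨Nat.findGreatest (Cand K t g i) i.1, i.2.1,
      Classical.choose ((Nat.findGreatest_spec h.choose_spec.1.le h.choose_spec).2)⟩
  else none

def Step (i i' : Idx X m) : Prop := parent K t g i = some i'

lemma step_spec {i i' : Idx X m} (h : Step K t g i i') :
    i'.1 < i.1 ∧ i'.2.1 = i.2.1 ∧ Good K i' ∧
      ∃ p ∈ sh t i, ∃ v ∈ sh t i', edist p v ≤ ENNReal.ofReal (g i'.1) := by
  classical
  rw [Step, parent] at h
  split at h
  · rename_i hex
    have hC : Cand K t g i (Nat.findGreatest (Cand K t g i) i.1) :=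
      Nat.findGreatest_spec hex.choose_spec.1.le hex.choose_spec
    have hV := Classical.choose_spec hC.2
    obtain ⟨hmem, hpts⟩ := hV
    obtain rfl := (Option.some.inj h).symm
    exact ⟨hC.1, rfl, hmem, hpts⟩
  · exact absurd h (by simp)

lemma step_max {i i' : Idx X m} {l : ℕ} (hc : Cand K t g i l) (h : Step K t g i i') :
    l ≤ i'.1 := by
  classical
  rw [Step, parent] at h
  split at h
  · obtain rfl := (Option.some.inj h).symm
    exact Nat.le_findGreatest hc.1.le hc
  · exact absurd h (by simp)

lemma step_exists {i : Idx X m} {l : ℕ} (hc : Cand K t g i l) :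
    ∃ i', Step K t g i i' := by
  classical
  have hne : parent K t g i ≠ none := by
    rw [parent, dif_pos ⟨l, hc⟩]; simp
  obtain ⟨i', hi'⟩ := Option.ne_none_iff_exists'.mp hne
  exact ⟨i', hi'⟩

lemma anc_lvl {i v : Idx X m} (h : Relation.ReflTransGen (Step K t g) i v) : v.1 ≤ i.1 := by
  induction h with
  | refl => exact le_refl _
  | tail _ h2 ih => exact le_trans (step_spec K t g h2).1.le ih

lemma anc_col {i v : Idx X m} (h : Relation.ReflTransGen (Step K t g) i v) : v.2.1 = i.2.1 := by
  induction h with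
  | refl => rfl
  | tail _ h2 ih => exact ((step_spec K t g h2).2.1).trans ih

lemma anc_eq_of_lvl {i v : Idx X m} (h : Relation.ReflTransGen (Step K t g) i v)
    (hl : i.1 ≤ v.1) : i = v := by
  rcases Relation.ReflTransGen.cases_head h with rfl | ⟨c, hstep, hrest⟩
  · rfl
  · exact absurd ((anc_lvl K t g hrest).trans_lt ((step_spec K t g hstep).1.trans_le hl))
      (lt_irrefl _)

lemma anc_comp {w a b : Idx X m} (ha : Relation.ReflTransGen (Step K t g) w a)
    (hb : Relation.ReflTransGen (Step K t g) w b) :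
    Relation.ReflTransGen (Step K t g) a b ∨ Relation.ReflTransGen (Step K t g) b a := by
  induction ha using Relation.ReflTransGen.head_induction_on with
  | refl => exact Or.inl hb
  | @head x c hstep hrest ih =>
    rcases Relation.ReflTransGen.cases_head hb with rfl | ⟨c', hstep', hb'⟩
    · exact Or.inr (Relation.ReflTransGen.head hstep hrest)
    · have hcc : c' = c := Option.some.inj (hstep'.symm.trans hstep)
      exact ih (hcc ▸ hb')

end Machinery


section Main

variable {X : Type*} [MetricSpace X] {m : ℕ}
variable (K : ℕ → Fin (m+1) → Set (Set X)) (t g M D : ℕ → ℝ)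

open EMetric

lemma sep (hdisj : ∀ j a, (K j a).Pairwise Disjoint) {j : ℕ} {a : Fin (m+1)} {U₁ U₂ : Set X}
    (h1 : U₁ ∈ K j a) (h2 : U₂ ∈ K j a) (hne : U₁ ≠ U₂) {p q : X}
    (hp : p ∈ sh t (j, a, U₁)) (hq : q ∈ sh t (j, a, U₂)) :
    ENNReal.ofReal (t j) ≤ edist p q := by
  by_contra hlt
  push_neg at hlt
  have hp' : ENNReal.ofReal (t j) < infEdist p U₁ᶜ := hp
  have hq1 : q ∈ U₁ := by
    by_contra hq1
    have h := infEdist_le_edist_of_mem (x := p) (s := U₁ᶜ) hq1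
    exact absurd (lt_of_le_of_lt h hlt) (not_lt.mpr hp'.le)
  have hq2 : q ∈ U₂ := sh_subset t _ hq
  exact Set.disjoint_left.mp (hdisj j a h1 h2 hne) hq1 hq2

lemma meet (hdisj : ∀ j a, (K j a).Pairwise Disjoint)
    (hdiam : ∀ j a U, U ∈ K j a → EMetric.diam U ≤ ENNReal.ofReal (M j))
    (ht0 : ∀ j, 0 < t j)
    (hDt : ∀ j, D j < t j)
    (hD0 : ∀ j, 0 ≤ D j)
    (hM0 : ∀ j, 0 ≤ M j)
    (hg0 : ∀ j, 0 ≤ g j)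
    (hDg : ∀ l k, l < k → D k ≤ g l)
    (hDD : ∀ l k, l < k → D k + M k + g l ≤ D l) :
    ∀ k₁ (i₁ i₂ : Idx X m), Good K i₁ → Good K i₂ → i₁.1 = k₁ → i₂.1 ≤ i₁.1 →
      i₂.2.1 = i₁.2.1 → ∀ x ∈ sh t i₂, ∀ p ∈ sh t i₁,
      edist x p ≤ ENNReal.ofReal (D i₁.1) →
      Relation.ReflTransGen (Step K t g) i₁ i₂ := by
  intro k₀
  induction k₀ using Nat.strong_induction_on with
  | _ k₀ IH =>
  rintro ⟨l₁, a₁, U₁⟩ ⟨l₂, a₂, U₂⟩ hg1 hg2 rfl hle hcol x hx p hp hxp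
  simp only at hle hcol hxp ⊢
  subst hcol
  rcases eq_or_lt_of_le hle with heq | hlt
  · -- same level: indices must be equal
    subst heq
    have hU : U₂ = U₁ := by
      by_contra hne
      have hsep := sep K t hdisj hg2 hg1 hne hx hp
      have : edist x p < ENNReal.ofReal (t l₂) :=
        lt_of_le_of_lt hxp (ENNReal.ofReal_lt_ofReal_iff (ht0 l₂)|>.mpr (hDt l₂))
      exact absurd hsep (not_le.mpr this)
    subst hU
    exact Relation.ReflTransGen.refl
  · -- strictly finer: find the parent step
    have hx' : x ∈ sh t (l₂, a₂, U₂) := hx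
    have hcand : Cand K t g (l₁, a₂, U₁) l₂ := by
      refine ⟨hlt, U₂, hg2, p, hp, x, hx', ?_⟩
      rw [edist_comm]
      exact hxp.trans (ENNReal.ofReal_le_ofReal (hDg l₂ l₁ hlt))
    obtain ⟨i', hstep⟩ := step_exists K t g hcand
    obtain ⟨hl', hcol', hgood', p', hp', v', hv', hpv⟩ := step_spec K t g hstep
    have hmax : l₂ ≤ i'.1 := step_max K t g hcand hstep
    have hpp' : edist p p' ≤ ENNReal.ofReal (M l₁) := by
      have h1 : p ∈ U₁ := sh_subset t _ hp
      have h2 : p' ∈ U₁ := sh_subset t _ hp'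
      exact (edist_le_diam_of_mem h1 h2).trans (hdiam _ _ _ hg1)
    have hdist : edist x v' ≤ ENNReal.ofReal (D i'.1) := by
      calc edist x v' ≤ edist x p + edist p p' + edist p' v' := edist_triangle4 _ _ _ _
        _ ≤ ENNReal.ofReal (D l₁) + ENNReal.ofReal (M l₁) + ENNReal.ofReal (g i'.1) :=
            add_le_add (add_le_add hxp hpp') hpv
        _ = ENNReal.ofReal (D l₁ + M l₁ + g i'.1) := by
            rw [← ENNReal.ofReal_add (hD0 _) (hM0 _), ← ENNReal.ofReal_add
              (add_nonneg (hD0 _) (hM0 _)) (hg0 _)]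
        _ ≤ ENNReal.ofReal (D i'.1) := ENNReal.ofReal_le_ofReal (hDD i'.1 l₁ hl')
    have hrec := IH i'.1 hl' i' (l₂, a₂, U₂) hgood' hg2 rfl hmax
      (by simpa using hcol'.symm) x hx' v' hv' hdist
    exact Relation.ReflTransGen.head hstep hrec

lemma drift
    (hdiam : ∀ j a U, U ∈ K j a → EMetric.diam U ≤ ENNReal.ofReal (M j))
    (hM0 : ∀ j, 0 ≤ M j) (hg0 : ∀ j, 0 ≤ g j)
    (hMg : ∀ l k, l < k → 2*M k + g l ≤ M l)
    (hMa : ∀ a b, a ≤ b → M b ≤ M a) :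
    ∀ {w v : Idx X m}, Relation.ReflTransGen (Step K t g) w v → Good K w →
      ∀ p ∈ sh t w, ∃ q ∈ sh t v, edist p q ≤ ENNReal.ofReal (M v.1 - M w.1) := by
  intro w v h
  induction h using Relation.ReflTransGen.head_induction_on with
  | refl =>
    intro _ p hp
    exact ⟨p, hp, by simp⟩
  | @head w w' hstep hrest ih =>
    intro hgw p hp
    obtain ⟨hl', hcol', hgood', p₀, hp₀, v₀, hv₀, hpv⟩ := step_spec K t g hstep
    obtain ⟨q, hq, hq2⟩ := ih hgood' v₀ hv₀
    refine ⟨q, hq, ?_⟩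
    have hpp₀ : edist p p₀ ≤ ENNReal.ofReal (M w.1) := by
      have h1 : p ∈ w.2.2 := sh_subset t _ hp
      have h2 : p₀ ∈ w.2.2 := sh_subset t _ hp₀
      exact (edist_le_diam_of_mem h1 h2).trans (hdiam _ _ _ hgw)
    calc edist p q ≤ edist p p₀ + edist p₀ v₀ + edist v₀ q := edist_triangle4 _ _ _ _
      _ ≤ ENNReal.ofReal (M w.1) + ENNReal.ofReal (g w'.1)
          + ENNReal.ofReal (M v.1 - M w'.1) := add_le_add (add_le_add hpp₀ hpv) hq2
      _ = ENNReal.ofReal (M w.1 + g w'.1 + (M v.1 - M w'.1)) := by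
          have hsub : 0 ≤ M v.1 - M w'.1 := by
            have := hMa v.1 w'.1 (anc_lvl K t g hrest)
            linarith
          rw [← ENNReal.ofReal_add (hM0 _) (hg0 _), ← ENNReal.ofReal_add
            (add_nonneg (hM0 _) (hg0 _)) hsub]
      _ ≤ ENNReal.ofReal (M v.1 - M w.1) := by
          apply ENNReal.ofReal_le_ofReal
          nlinarith [hMg w'.1 w.1 hl']

def Fnl (v : Idx X m) : Set X :=
  ⋃ (w : Idx X m) (_ : Good K w) (_ : Relation.ReflTransGen (Step K t g) w v), sh t w

lemma fnl_open (v : Idx X m) : IsOpen (Fnl K t g v) :=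
  isOpen_iUnion fun w => isOpen_iUnion fun _ => isOpen_iUnion fun _ => sh_open t w

lemma subset_fnl {v : Idx X m} (hv : Good K v) : sh t v ⊆ Fnl K t g v := fun x hx =>
  Set.mem_iUnion.mpr ⟨v, Set.mem_iUnion.mpr ⟨hv, Set.mem_iUnion.mpr
    ⟨Relation.ReflTransGen.refl, hx⟩⟩⟩

lemma mem_fnl {v : Idx X m} {x : X} (hx : x ∈ Fnl K t g v) :
    ∃ w : Idx X m, Good K w ∧ Relation.ReflTransGen (Step K t g) w v ∧ x ∈ sh t w := by
  simp only [Fnl, Set.mem_iUnion] at hx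
  obtain ⟨w, hw, hrel, hxw⟩ := hx
  exact ⟨w, hw, hrel, hxw⟩

lemma fnl_mono {v v' : Idx X m} (h : Relation.ReflTransGen (Step K t g) v v') :
    Fnl K t g v ⊆ Fnl K t g v' := by
  intro x hx
  obtain ⟨w, hw, hrel, hxw⟩ := mem_fnl K t g hx
  exact Set.mem_iUnion.mpr ⟨w, Set.mem_iUnion.mpr ⟨hw, Set.mem_iUnion.mpr
    ⟨hrel.trans h, hxw⟩⟩⟩

lemma fnl_diam
    (hdiam : ∀ j a U, U ∈ K j a → EMetric.diam U ≤ ENNReal.ofReal (M j))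
    (hM0 : ∀ j, 0 ≤ M j) (hg0 : ∀ j, 0 ≤ g j)
    (hMg : ∀ l k, l < k → 2*M k + g l ≤ M l)
    (hMa : ∀ a b, a ≤ b → M b ≤ M a)
    {v : Idx X m} (hv : Good K v) :
    EMetric.diam (Fnl K t g v) ≤ ENNReal.ofReal (3 * M v.1) := by
  apply EMetric.diam_le
  intro x hx y hy
  obtain ⟨w₁, hw₁, hrel₁, hxw₁⟩ := mem_fnl K t g hx
  obtain ⟨w₂, hw₂, hrel₂, hyw₂⟩ := mem_fnl K t g hy
  obtain ⟨q₁, hq₁, hd₁⟩ := drift K t g M hdiam hM0 hg0 hMg hMa hrel₁ hw₁ x hxw₁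
  obtain ⟨q₂, hq₂, hd₂⟩ := drift K t g M hdiam hM0 hg0 hMg hMa hrel₂ hw₂ y hyw₂
  have hmid : edist q₁ q₂ ≤ ENNReal.ofReal (M v.1) := by
    have h1 : q₁ ∈ v.2.2 := sh_subset t _ hq₁
    have h2 : q₂ ∈ v.2.2 := sh_subset t _ hq₂
    exact (edist_le_diam_of_mem h1 h2).trans (hdiam _ _ _ hv)
  calc edist x y ≤ edist x q₁ + edist q₁ q₂ + edist q₂ y := edist_triangle4 _ _ _ _
    _ ≤ ENNReal.ofReal (M v.1) + ENNReal.ofReal (M v.1) + ENNReal.ofReal (M v.1) := by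
        refine add_le_add (add_le_add (hd₁.trans ?_) hmid) ?_
        · exact ENNReal.ofReal_le_ofReal (by nlinarith [hM0 w₁.1])
        · rw [edist_comm]
          exact hd₂.trans (ENNReal.ofReal_le_ofReal (by nlinarith [hM0 w₂.1]))
    _ ≤ ENNReal.ofReal (3 * M v.1) := by
        rw [← ENNReal.ofReal_add (hM0 _) (hM0 _), ← ENNReal.ofReal_add
          (add_nonneg (hM0 _) (hM0 _)) (hM0 _)]
        exact ENNReal.ofReal_le_ofReal (by nlinarith)

lemma fnl_sep (hdisj : ∀ j a, (K j a).Pairwise Disjoint)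
    (hdiam : ∀ j a U, U ∈ K j a → EMetric.diam U ≤ ENNReal.ofReal (M j))
    (ht0 : ∀ j, 0 < t j)
    (hDt : ∀ j, D j < t j)
    (hD0 : ∀ j, 0 ≤ D j)
    (hM0 : ∀ j, 0 ≤ M j)
    (hg0 : ∀ j, 0 ≤ g j)
    (hDg : ∀ l k, l < k → D k ≤ g l)
    (hDD : ∀ l k, l < k → D k + M k + g l ≤ D l)
    {v₁ v₂ : Idx X m} (h1 : Good K v₁) (h2 : Good K v₂) (hcol : v₁.2.1 = v₂.2.1)
    {x : X} (hx1 : x ∈ Fnl K t g v₁) (hx2 : x ∈ Fnl K t g v₂) :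
    Relation.ReflTransGen (Step K t g) v₁ v₂ ∨ Relation.ReflTransGen (Step K t g) v₂ v₁ := by
  obtain ⟨w₁, hw₁, hrel₁, hxw₁⟩ := mem_fnl K t g hx1
  obtain ⟨w₂, hw₂, hrel₂, hxw₂⟩ := mem_fnl K t g hx2
  have hcolw : w₂.2.1 = w₁.2.1 :=
    (anc_col K t g hrel₂).symm.trans (hcol.symm.trans (anc_col K t g hrel₁))
  have key : ∀ (wa wb : Idx X m), Good K wa → Good K wb → wb.1 ≤ wa.1 →
      wb.2.1 = wa.2.1 → x ∈ sh t wa → x ∈ sh t wb →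
      Relation.ReflTransGen (Step K t g) wa wb := by
    intro wa wb hga hgb hlvl hc hxa hxb
    exact meet K t g M D hdisj hdiam ht0 hDt hD0 hM0 hg0 hDg hDD wa.1 wa wb hga hgb rfl
      hlvl hc x hxb x hxa (by simp)
  rcases le_total w₂.1 w₁.1 with hl | hl
  · have h12 := key w₁ w₂ hw₁ hw₂ hl hcolw hxw₁ hxw₂
    have hto2 : Relation.ReflTransGen (Step K t g) w₁ v₂ := h12.trans hrel₂
    exact anc_comp K t g hrel₁ hto2
  · have h21 := key w₂ w₁ hw₂ hw₁ hl hcolw.symm hxw₂ hxw₁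
    have hto1 : Relation.ReflTransGen (Step K t g) w₂ v₁ := h21.trans hrel₁
    exact anc_comp K t g hto1 hrel₂

end Main

end Prop44

namespace Prop44

open EMetric

lemma extract {X : Type*} [MetricSpace X] (n : ℕ) (hdim : cdim X ≤ (n : ℕ∞)) :
    ∃ (m : ℕ) (Λ τ₀ : ℝ), m ≤ n ∧ 0 < Λ ∧ Λ ≤ 1 ∧ 0 < τ₀ ∧ Nonempty X ∧
      ∀ τ : ℝ, 0 < τ → τ < τ₀ → ∃ F : Fin (m+1) → Set (Set X),
        (∀ a, (F a).Pairwise Disjoint) ∧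
        (∀ a U, U ∈ F a → EMetric.diam U ≤ ENNReal.ofReal τ) ∧
        (∀ x : X, ∃ a U, U ∈ F a ∧ ENNReal.ofReal (Λ*τ) < EMetric.infEdist x Uᶜ) ∧
        (∀ x : X, ∃ a U, U ∈ F a ∧ x ∈ U ∧ ENNReal.ofReal (Λ*τ) < EMetric.diam U) ∧
        (∃ a U, U ∈ F a ∧ U.Nonempty) := by
  have hm : ∃ m : ℕ, m ≤ n ∧ 0 < c1 X m := by
    by_contra h
    push_neg at h
    have hbig : ((n : ℕ∞) + 1) ≤ cdim X := by
      rw [cdim]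
      refine le_iInf fun m => le_iInf fun hc => ?_
      have hmn : ¬ m ≤ n := fun hle => absurd hc (not_lt.mpr (h m hle))
      have h1 : n + 1 ≤ m := by omega
      exact_mod_cast (Nat.cast_le (α := ℕ∞)).mpr h1
    have h2 := hbig.trans hdim
    have h3 : ((n + 1 : ℕ) : ℕ∞) ≤ ((n : ℕ) : ℕ∞) := by exact_mod_cast h2
    rw [Nat.cast_le] at h3
    omega
  obtain ⟨m, hmn, hc1⟩ := hm
  rw [c1] at hc1
  obtain ⟨δ₀, hδ₀⟩ := lt_iSup_iff.mp hc1
  obtain ⟨hδIoo, hcd⟩ := lt_iSup_iff.mp hδ₀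
  obtain ⟨b, hb0, hbc⟩ := exists_between hcd
  rw [c1delta] at hbc
  have hev := Filter.eventually_lt_of_lt_liminf hbc
  obtain ⟨τ₀, hτ₀Ioi, hsub⟩ := mem_nhdsGT_iff_exists_Ioo_subset.mp hev
  have hτ₀ : (0:ℝ) < τ₀ := hτ₀Ioi
  set b' : ℝ≥0∞ := min b 1 with hb'def
  have hb'0 : b' ≠ 0 := by
    have : (0:ℝ≥0∞) < b' := lt_min hb0 zero_lt_one
    exact this.ne' 
  have hb'top : b' ≠ ⊤ := (min_le_right _ _).trans_lt (by simp) |>.ne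
  set eR : ℝ := b'.toReal with heRdef
  have heR0 : 0 < eR := ENNReal.toReal_pos hb'0 hb'top
  have heR1 : eR ≤ 1 := by
    have := ENNReal.toReal_mono (by simp : (1:ℝ≥0∞) ≠ ⊤) (min_le_right b 1)
    simpa using this
  have hδ01 : 0 < δ₀ := hδIoo.1
  have hδ02 : δ₀ < 1 := hδIoo.2
  set Λ : ℝ := eR * δ₀ / 2 with hΛdef
  have hΛ0 : 0 < Λ := by positivity
  have hΛ1 : Λ ≤ 1 := by nlinarith
  -- the per-scale coverings
  have key : ∀ τ : ℝ, 0 < τ → τ < τ₀ → ∃ F : Fin (m+1) → Set (Set X),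
      (∀ a, (F a).Pairwise Disjoint) ∧
      (∀ a U, U ∈ F a → EMetric.diam U ≤ ENNReal.ofReal τ) ∧
      (∀ x : X, ∃ a U, U ∈ F a ∧ ENNReal.ofReal (Λ*τ) < EMetric.infEdist x Uᶜ) ∧
      (∀ x : X, ∃ a U, U ∈ F a ∧ x ∈ U ∧ ENNReal.ofReal (Λ*τ) < EMetric.diam U) ∧
      (∃ a U, U ∈ F a ∧ U.Nonempty) := by
    intro τ hτ0 hττ₀
    have hbt : b < c1tau X m δ₀ τ := hsub ⟨hτ0, hττ₀⟩
    rw [c1tau] at hbt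
    obtain ⟨𝒰, h𝒰⟩ := lt_iSup_iff.mp hbt
    obtain ⟨⟨hcov, hcolored, hmlo, hmhi⟩, hcap⟩ := lt_iSup_iff.mp h𝒰
    obtain ⟨Fc, hFc_eq, hFc_disj⟩ := hcolored
    have hmesh0 : famMesh 𝒰 ≠ 0 := by
      have h1 : (0:ℝ≥0∞) < ENNReal.ofReal (δ₀*τ) := ENNReal.ofReal_pos.mpr (mul_pos hδ01 hτ0)
      exact (h1.trans_le hmlo).ne'
    have hmeshtop : famMesh 𝒰 ≠ ⊤ := (hmhi.trans_lt ENNReal.ofReal_lt_top).ne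
    rw [famCap, if_neg (by rintro (h | ⟨-, h⟩); exacts [hmesh0 h, hmeshtop h])] at hcap
    have hLeb : b * famMesh 𝒰 < famLeb 𝒰 :=
      (ENNReal.lt_div_iff_mul_lt (Or.inl hmesh0) (Or.inl hmeshtop)).mp hcap
    have hLeb2 : ENNReal.ofReal (2*Λ*τ) ≤ famLeb 𝒰 := by
      have hofe : ENNReal.ofReal eR = b' := ENNReal.ofReal_toReal hb'top
      calc ENNReal.ofReal (2*Λ*τ) = ENNReal.ofReal (eR*(δ₀*τ)) := by
            rw [hΛdef]; ring_nf
        _ = ENNReal.ofReal eR * ENNReal.ofReal (δ₀*τ) := ENNReal.ofReal_mul heR0.le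
        _ ≤ b' * famMesh 𝒰 := by rw [hofe]; exact mul_le_mul_right hmlo b'
        _ ≤ b * famMesh 𝒰 := mul_le_mul_left (min_le_left _ _) _
        _ ≤ famLeb 𝒰 := hLeb.le
    have hmemU : ∀ U, U ∈ 𝒰 → ∃ a, U ∈ Fc a := by
      intro U hU
      rw [hFc_eq] at hU
      exact Set.mem_iUnion.mp hU
    have hdiamU : ∀ U, U ∈ 𝒰 → EMetric.diam U ≤ ENNReal.ofReal τ := by
      intro U hU
      refine le_trans ?_ hmhi
      exact le_iSup₂ (f := fun (U : Set X) (_ : U ∈ 𝒰) => EMetric.diam U) U hU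
    have hΛ2Λ : ENNReal.ofReal (Λ*τ) < ENNReal.ofReal (2*Λ*τ) := by
      rw [ENNReal.ofReal_lt_ofReal_iff (by positivity)]
      nlinarith
    have hLebAt : ∀ x : X, ENNReal.ofReal (2*Λ*τ) ≤ famLebAt 𝒰 x := fun x =>
      hLeb2.trans (iInf_le _ x)
    refine ⟨Fc, hFc_disj, ?_, ?_, ?_, ?_⟩
    · intro a U hU
      exact hdiamU U (hFc_eq ▸ Set.mem_iUnion.mpr ⟨a, hU⟩)
    · intro x
      have h1 : ENNReal.ofReal (Λ*τ) < ⨆ U ∈ 𝒰, infEdist x Uᶜ :=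
        hΛ2Λ.trans_le ((le_min_iff.mp (hLebAt x)).1)
      obtain ⟨U, hU⟩ := lt_iSup_iff.mp h1
      obtain ⟨hU𝒰, hUlt⟩ := lt_iSup_iff.mp hU
      obtain ⟨a, ha⟩ := hmemU U hU𝒰
      exact ⟨a, U, ha, hUlt⟩
    · intro x
      have h1 : ENNReal.ofReal (Λ*τ) < famMeshAt 𝒰 x :=
        hΛ2Λ.trans_le ((le_min_iff.mp (hLebAt x)).2)
      rw [famMeshAt] at h1
      obtain ⟨U, hU⟩ := lt_iSup_iff.mp h1
      obtain ⟨hU𝒰, hU2⟩ := lt_iSup_iff.mp hU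
      obtain ⟨hxU, hUlt⟩ := lt_iSup_iff.mp hU2
      obtain ⟨a, ha⟩ := hmemU U hU𝒰
      exact ⟨a, U, ha, hxU, hUlt⟩
    · have h1 : (0:ℝ≥0∞) < famMesh 𝒰 := pos_iff_ne_zero.mpr hmesh0
      rw [famMesh] at h1
      obtain ⟨U, hU⟩ := lt_iSup_iff.mp h1
      obtain ⟨hU𝒰, hUlt⟩ := lt_iSup_iff.mp hU
      obtain ⟨a, ha⟩ := hmemU U hU𝒰
      refine ⟨a, U, ha, ?_⟩
      rcases U.eq_empty_or_nonempty with rfl | h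
      · simp [EMetric.diam] at hUlt
      · exact h
  -- nonempty
  have hne : Nonempty X := by
    obtain ⟨F, -, -, -, -, a, U, -, x, hx⟩ := key (τ₀/2) (by positivity) (by linarith)
    exact ⟨x⟩
  exact ⟨m, Λ, τ₀, hmn, hΛ0, hΛ1, hτ₀, hne, key⟩

end Prop44

set_option maxHeartbeats 2000000 in
/-- **Proposition 4.4.** If `cdim X ≤ n < ∞`, then there are positive constants
`c₀`, `δ` such that for every sufficiently small `r > 0` there exists a sequence of open
coverings `𝒰_j` of `X`, `j ∈ ℕ`, such that: (i) every `𝒰_j` is `(n+1)`-colored by one and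
the same color set `A = Fin (n+1)`; (ii) `δ rʲ ≤ mesh 𝒰_j ≤ rʲ` and
`L(𝒰_j) ≥ c₀ · mesh 𝒰_j`; (iii) for `i > j` the covering `𝒰_i` is inscribed in `𝒰_j`;
(iv) for every color `a` the union `⋃_j 𝒰_j^a` is separated. -/
theorem exists_separated_colored_covering_sequence
    {X : Type*} [MetricSpace X] (n : ℕ) (hdim : cdim X ≤ (n : ℕ∞)) :
    ∃ c₀ δ r₀ : ℝ, 0 < c₀ ∧ 0 < δ ∧ 0 < r₀ ∧ ∀ r : ℝ, 0 < r → r < r₀ →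
      ∃ 𝒱 : ℕ → Fin (n + 1) → Set (Set X),
        (∀ j, IsOpenCover (⋃ a, 𝒱 j a)) ∧
        (∀ j a, (𝒱 j a).Pairwise Disjoint) ∧
        (∀ j : ℕ, ENNReal.ofReal (δ * r ^ j) ≤ famMesh (⋃ a, 𝒱 j a) ∧
          famMesh (⋃ a, 𝒱 j a) ≤ ENNReal.ofReal (r ^ j) ∧
          ENNReal.ofReal c₀ * famMesh (⋃ a, 𝒱 j a) ≤ famLeb (⋃ a, 𝒱 j a)) ∧
        (∀ i j : ℕ, j < i → ∀ U ∈ ⋃ a, 𝒱 i a, ∃ V ∈ ⋃ a, 𝒱 j a, U ⊆ V) ∧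
        (∀ a, SeparatedFam (⋃ j, 𝒱 j a)) := by
  classical
  obtain ⟨m, Λ, τ₀, hmn, hΛ0, hΛ1, hτ₀, hne, key⟩ := Prop44.extract n hdim
  have key' : ∀ τ : ℝ, ∃ F : Fin (m+1) → Set (Set X), 0 < τ → τ < τ₀ →
      (∀ a, (F a).Pairwise Disjoint) ∧
      (∀ a U, U ∈ F a → EMetric.diam U ≤ ENNReal.ofReal τ) ∧
      (∀ x : X, ∃ a U, U ∈ F a ∧ ENNReal.ofReal (Λ*τ) < EMetric.infEdist x Uᶜ) ∧
      (∀ x : X, ∃ a U, U ∈ F a ∧ x ∈ U ∧ ENNReal.ofReal (Λ*τ) < EMetric.diam U) := by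
    intro τ
    by_cases h : 0 < τ ∧ τ < τ₀
    · obtain ⟨F, h1, h2, h3, h4, -⟩ := key τ h.1 h.2
      exact ⟨F, fun _ _ => ⟨h1, h2, h3, h4⟩⟩
    · exact ⟨fun _ => ∅, fun h1 h2 => absurd ⟨h1, h2⟩ h⟩
  choose F hF using key'
  set s₀ : ℝ := min (τ₀/2) (1/3) with hs₀def
  have hs₀0 : 0 < s₀ := lt_min (by linarith) (by norm_num)
  have hs₀3 : s₀ ≤ 1/3 := min_le_right _ _
  have hs₀τ : s₀ < τ₀ := (min_le_left _ _).trans_lt (by linarith)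
  refine ⟨Λ^2/8*s₀, Λ^2/8*s₀, Λ/20, by positivity, by positivity, by positivity, ?_⟩
  intro r hr0 hrΛ
  have hr1 : r < 1 := by nlinarith
  have hpow : ∀ j : ℕ, 0 < r^j := fun j => pow_pos hr0 j
  have hpow1 : ∀ j : ℕ, r^j ≤ 1 := fun j => pow_le_one₀ hr0.le hr1.le
  have hpmono : ∀ a b : ℕ, a ≤ b → r^b ≤ r^a := fun a b hab =>
    pow_le_pow_of_le_one hr0.le hr1.le hab
  have hτj0 : ∀ j : ℕ, 0 < s₀*r^j := fun j => by positivity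
  have hτjτ₀ : ∀ j : ℕ, s₀*r^j < τ₀ := fun j => by nlinarith [hpow j, hpow1 j]
  have hkey : ∀ l k : ℕ, l < k → r^k ≤ r^l * (Λ/20) := by
    intro l k hlk
    calc r^k ≤ r^(l+1) := hpmono (l+1) k (by omega)
      _ = r^l * r := by ring
      _ ≤ r^l * (Λ/20) := by nlinarith [hpow l]
  -- the data functions
  set K : ℕ → Fin (m+1) → Set (Set X) := fun j => F (s₀*r^j) with hK
  set t : ℕ → ℝ := fun j => Λ/2*(s₀*r^j) with ht
  set g : ℕ → ℝ := fun j => Λ/100*(s₀*r^j) with hg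
  set M : ℕ → ℝ := fun j => s₀*r^j with hM
  set D : ℕ → ℝ := fun j => Λ/10*(s₀*r^j) with hD
  have hFj := fun j : ℕ => hF (s₀*r^j) (hτj0 j) (hτjτ₀ j)
  have hdisj : ∀ j a, (K j a).Pairwise Disjoint := fun j => (hFj j).1
  have hdiam : ∀ j a U, U ∈ K j a → EMetric.diam U ≤ ENNReal.ofReal (M j) :=
    fun j => (hFj j).2.1
  have ht0 : ∀ j, 0 < t j := fun j => by
    simp only [ht]; positivity
  have hDt : ∀ j, D j < t j := fun j => by
    simp only [hD, ht]; nlinarith [hτj0 j]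
  have hD0 : ∀ j, 0 ≤ D j := fun j => by simp only [hD]; positivity
  have hM0 : ∀ j, 0 ≤ M j := fun j => by simp only [hM]; positivity
  have hg0 : ∀ j, 0 ≤ g j := fun j => by simp only [hg]; positivity
  have hstepC : ∀ l k : ℕ, l < k → s₀*r^k ≤ (Λ/20)*(s₀*r^l) := by
    intro l k hlk
    have h1 := mul_le_mul_of_nonneg_left (hkey l k hlk) hs₀0.le
    nlinarith [h1]
  have hDg : ∀ l k, l < k → D k ≤ g l := by
    intro l k hlk
    simp only [hD, hg]
    have hC := hstepC l k hlk
    have hA0 : (0:ℝ) ≤ s₀*r^l := (hτj0 l).le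
    have h1 := mul_le_mul_of_nonneg_left hC hΛ0.le
    have h2 := mul_le_mul_of_nonneg_right hΛ1 (mul_nonneg hΛ0.le hA0)
    have h3 : (0:ℝ) ≤ Λ*(s₀*r^l) := mul_nonneg hΛ0.le hA0
    nlinarith [h1, h2, h3]
  have hDD : ∀ l k, l < k → D k + M k + g l ≤ D l := by
    intro l k hlk
    simp only [hD, hM, hg]
    have hC := hstepC l k hlk
    have hA0 : (0:ℝ) ≤ s₀*r^l := (hτj0 l).le
    have h1 := mul_le_mul_of_nonneg_left hC hΛ0.le
    have h2 := mul_le_mul_of_nonneg_right hΛ1 (mul_nonneg hΛ0.le hA0)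
    have h3 : (0:ℝ) ≤ Λ*(s₀*r^l) := mul_nonneg hΛ0.le hA0
    nlinarith [h1, h2, h3, hC]
  have hMg : ∀ l k, l < k → 2*M k + g l ≤ M l := by
    intro l k hlk
    simp only [hM, hg]
    have hC := hstepC l k hlk
    have hA0 : (0:ℝ) ≤ s₀*r^l := (hτj0 l).le
    have h2 := mul_le_mul_of_nonneg_right hΛ1 hA0
    nlinarith [hC, h2, hA0]
  have hMa : ∀ a b : ℕ, a ≤ b → M b ≤ M a := by
    intro a b hab
    simp only [hM]
    exact mul_le_mul_of_nonneg_left (hpmono a b hab) hs₀0.le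
  -- deep witnesses
  have deep : ∀ (x : X) (j : ℕ), ∃ (a : Fin (m+1)) (U : Set X), U ∈ K j a ∧
      x ∈ Prop44.sh t (j,a,U) ∧
      ENNReal.ofReal (t j) ≤ EMetric.infEdist x (Prop44.sh t (j,a,U))ᶜ := by
    intro x j
    obtain ⟨a, U, hU, hd⟩ := (hFj j).2.2.1 x
    have hxsh : x ∈ Prop44.sh t (j,a,U) := by
      show ENNReal.ofReal (t j) < EMetric.infEdist x Uᶜ
      refine lt_of_le_of_lt (ENNReal.ofReal_le_ofReal ?_) hd
      simp only [ht]; nlinarith [hτj0 j]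
    refine ⟨a, U, hU, hxsh, ?_⟩
    rw [EMetric.infEdist, EMetric.le_infEdist]
    intro y hy
    have hy' : EMetric.infEdist y Uᶜ ≤ ENNReal.ofReal (t j) := not_lt.mp hy
    by_contra hlt
    push_neg at hlt
    have h1 : EMetric.infEdist x Uᶜ ≤ edist x y + EMetric.infEdist y Uᶜ :=
      EMetric.infEdist_le_edist_add_infEdist
    have h2 : edist x y + EMetric.infEdist y Uᶜ < ENNReal.ofReal (t j) + ENNReal.ofReal (t j) :=
      lt_of_le_of_lt (add_le_add_right hy' _) (ENNReal.add_lt_add_right ENNReal.ofReal_ne_top hlt)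
    have h3 : ENNReal.ofReal (t j) + ENNReal.ofReal (t j) = ENNReal.ofReal (Λ*(s₀*r^j)) := by
      rw [← ENNReal.ofReal_add (ht0 j).le (ht0 j).le]
      congr 1
      simp only [ht]; ring
    rw [h3] at h2
    exact absurd hd (not_lt.mpr (h1.trans h2.le))
  -- thick witnesses
  have thick : ∀ (x : X) (j : ℕ) (i : Prop44.Idx X m), x ∈ Prop44.sh t i → i.1 = j →
      ENNReal.ofReal (t j) ≤ EMetric.infEdist x (Prop44.sh t i)ᶜ →
      ENNReal.ofReal ((Λ^2/8*s₀) * r^j) < EMetric.diam (Prop44.sh t i) := by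
    intro x j i hx hij hdepth
    have hτ'0 : (0:ℝ) < Λ/4*(s₀*r^j) := by positivity
    have hτ'τ₀ : Λ/4*(s₀*r^j) < τ₀ := by nlinarith [hτjτ₀ j, hτj0 j]
    obtain ⟨a', U', hU', hxU', hdU'⟩ := (hF (Λ/4*(s₀*r^j)) hτ'0 hτ'τ₀).2.2.2 x
    have hdne : ¬ (EMetric.diam U' ≤ ENNReal.ofReal (Λ*(Λ/4*(s₀*r^j)))) := not_le.mpr hdU'
    rw [EMetric.diam, EMetric.diam_le_iff] at hdne
    push_neg at hdne
    obtain ⟨y, hy, z, hz, hyz⟩ := hdne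
    obtain ⟨w, hwU', hwfar⟩ : ∃ w ∈ U',
        ENNReal.ofReal (Λ*(Λ/4*(s₀*r^j))/2) < edist x w := by
      by_contra hc
      push_neg at hc
      have h1 : edist y z ≤ edist y x + edist x z := edist_triangle _ _ _
      have h2 : edist y x ≤ ENNReal.ofReal (Λ*(Λ/4*(s₀*r^j))/2) := by
        rw [edist_comm]; exact hc y hy
      have h3 : edist x z ≤ ENNReal.ofReal (Λ*(Λ/4*(s₀*r^j))/2) := hc z hz
      have h4 : edist y z ≤ ENNReal.ofReal (Λ*(Λ/4*(s₀*r^j))) := by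
        refine h1.trans ((add_le_add h2 h3).trans ?_)
        rw [← ENNReal.ofReal_add (by positivity) (by positivity)]
        exact ENNReal.ofReal_le_ofReal (le_of_eq (by ring))
      exact absurd hyz (not_lt.mpr h4)
    have hwnear : edist x w ≤ ENNReal.ofReal (Λ/4*(s₀*r^j)) :=
      (EMetric.edist_le_diam_of_mem hxU' hwU').trans
        ((hF (Λ/4*(s₀*r^j)) hτ'0 hτ'τ₀).2.1 a' U' hU')
    have hwin : w ∈ Prop44.sh t i := by
      refine Prop44.mem_of_edist_lt hdepth (hwnear.trans_lt ?_)
      rw [ENNReal.ofReal_lt_ofReal_iff (ht0 j)]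
      simp only [ht]; nlinarith [hτj0 j]
    have hfin : edist x w ≤ EMetric.diam (Prop44.sh t i) := EMetric.edist_le_diam_of_mem hx hwin
    refine lt_of_lt_of_le ?_ hfin
    have : (Λ^2/8*s₀) * r^j = Λ*(Λ/4*(s₀*r^j))/2 := by ring
    rw [this]
    exact hwfar
  -- the coverings
  have hcast : m + 1 ≤ n + 1 := by omega
  set V : ℕ → Fin (n+1) → Set (Set X) := fun j a =>
    {S | ∃ b : Fin (m+1), Fin.castLE hcast b = a ∧
      ∃ U, U ∈ K j b ∧ S = Prop44.Fnl K t g (j, b, U)} with hV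
  have hmemV : ∀ (j : ℕ) (S : Set X), S ∈ ⋃ a, V j a ↔
      ∃ (b : Fin (m+1)) (U : Set X), U ∈ K j b ∧ S = Prop44.Fnl K t g (j,b,U) := by
    intro j S
    simp only [Set.mem_iUnion, hV, Set.mem_setOf_eq]
    constructor
    · rintro ⟨a, b, -, U, hU, rfl⟩
      exact ⟨b, U, hU, rfl⟩
    · rintro ⟨b, U, hU, rfl⟩
      exact ⟨Fin.castLE hcast b, b, rfl, U, hU, rfl⟩
  have hGood : ∀ (j : ℕ) (b : Fin (m+1)) (U : Set X), U ∈ K j b →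
      Prop44.Good K ((j, b, U) : Prop44.Idx X m) := fun j b U hU => hU
  refine ⟨V, ?_, ?_, ?_, ?_, ?_⟩
  · -- open cover
    intro j
    constructor
    · intro S hS
      obtain ⟨b, U, hU, rfl⟩ := (hmemV j S).mp hS
      exact Prop44.fnl_open K t g _
    · apply Set.eq_univ_of_forall
      intro x
      obtain ⟨a, U, hU, hx, -⟩ := deep x j
      exact Set.mem_sUnion.mpr ⟨Prop44.Fnl K t g (j,a,U), (hmemV j _).mpr ⟨a, U, hU, rfl⟩,
        Prop44.subset_fnl K t g (hGood j a U hU) hx⟩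
  · -- pairwise disjoint colors
    intro j a S₁ hS₁ S₂ hS₂ hne12
    simp only [hV, Set.mem_setOf_eq] at hS₁ hS₂
    obtain ⟨b₁, hb₁, U₁, hU₁, rfl⟩ := hS₁
    obtain ⟨b₂, hb₂, U₂, hU₂, rfl⟩ := hS₂
    have hbb : b₁ = b₂ := Fin.castLE_injective hcast (hb₁.trans hb₂.symm)
    subst hbb
    by_contra hnd
    rw [Set.not_disjoint_iff] at hnd
    obtain ⟨x, hx1, hx2⟩ := hnd
    have hor := Prop44.fnl_sep K t g M D hdisj hdiam ht0 hDt hD0 hM0 hg0 hDg hDD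
      (hGood j b₁ U₁ hU₁) (hGood j b₁ U₂ hU₂) rfl hx1 hx2
    rcases hor with h | h
    · exact hne12 (by rw [Prop44.anc_eq_of_lvl K t g h (le_refl j)])
    · exact hne12 (by rw [Prop44.anc_eq_of_lvl K t g h (le_refl j)])
  · -- mesh and Lebesgue bounds
    intro j
    have hmesh_up : famMesh (⋃ a, V j a) ≤ ENNReal.ofReal (r^j) := by
      rw [famMesh]
      refine iSup₂_le ?_
      intro S hS
      obtain ⟨b, U, hU, rfl⟩ := (hmemV j S).mp hS
      refine (Prop44.fnl_diam K t g M hdiam hM0 hg0 hMg hMa (hGood j b U hU)).trans ?_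
      refine ENNReal.ofReal_le_ofReal ?_
      show 3 * M j ≤ r^j
      simp only [hM]
      nlinarith [hpow j]
    obtain ⟨x₀⟩ := hne
    have hdeep_diam : ∀ x : X, ∃ (a : Fin (m+1)) (U : Set X) (h : U ∈ K j a),
        x ∈ Prop44.Fnl K t g (j,a,U) ∧
        ENNReal.ofReal ((Λ^2/8*s₀)*r^j) ≤ EMetric.infEdist x (Prop44.Fnl K t g (j,a,U))ᶜ ∧
        ENNReal.ofReal ((Λ^2/8*s₀)*r^j) ≤ EMetric.diam (Prop44.Fnl K t g (j,a,U)) := by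
      intro x
      obtain ⟨a, U, hU, hx, hdep⟩ := deep x j
      refine ⟨a, U, hU, Prop44.subset_fnl K t g (hGood j a U hU) hx, ?_, ?_⟩
      · refine le_trans (ENNReal.ofReal_le_ofReal ?_) (hdep.trans (EMetric.infEdist_anti
          (Set.compl_subset_compl.mpr (Prop44.subset_fnl K t g (hGood j a U hU)))))
        show (Λ^2/8*s₀)*r^j ≤ t j
        simp only [ht]
        have hq := mul_le_mul_of_nonneg_right
          (by nlinarith : Λ*Λ ≤ Λ) (le_of_lt (mul_pos hs₀0 (hpow j)))
        nlinarith [hq, mul_pos hs₀0 (hpow j)]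
      · refine le_trans (thick x j (j,a,U) hx rfl hdep).le ?_
        exact EMetric.diam_mono (Prop44.subset_fnl K t g (hGood j a U hU))
    have hleb_low : ∀ x : X, ENNReal.ofReal ((Λ^2/8*s₀)*r^j) ≤ famLebAt (⋃ a, V j a) x := by
      intro x
      obtain ⟨a, U, hU, hxF, hdep, hdF⟩ := hdeep_diam x
      have hSmem : Prop44.Fnl K t g (j,a,U) ∈ ⋃ a, V j a := (hmemV j _).mpr ⟨a, U, hU, rfl⟩
      refine le_min ?_ ?_
      · refine le_trans hdep ?_
        exact le_iSup₂ (f := fun (W : Set X) (_ : W ∈ ⋃ a, V j a) =>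
          EMetric.infEdist x Wᶜ) _ hSmem
      · rw [famMeshAt]
        refine le_trans ?_ (le_iSup₂ (f := fun (W : Set X) (_ : W ∈ ⋃ a, V j a) =>
          ⨆ (_ : x ∈ W), EMetric.diam W) _ hSmem)
        refine le_trans ?_ (le_iSup (fun (_ : x ∈ Prop44.Fnl K t g (j,a,U)) =>
          EMetric.diam (Prop44.Fnl K t g (j,a,U))) hxF)
        exact hdF
    refine ⟨?_, hmesh_up, ?_⟩
    · -- mesh lower bound
      obtain ⟨a, U, hU, hxF, hdep, hdF⟩ := hdeep_diam x₀
      have hSmem : Prop44.Fnl K t g (j,a,U) ∈ ⋃ a, V j a := (hmemV j _).mpr ⟨a, U, hU, rfl⟩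
      refine le_trans hdF ?_
      rw [famMesh]
      exact le_iSup₂ (f := fun (W : Set X) (_ : W ∈ ⋃ a, V j a) => EMetric.diam W) _ hSmem
    · -- Lebesgue bound
      calc ENNReal.ofReal (Λ^2/8*s₀) * famMesh (⋃ a, V j a)
          ≤ ENNReal.ofReal (Λ^2/8*s₀) * ENNReal.ofReal (r^j) := mul_le_mul_right hmesh_up _
        _ = ENNReal.ofReal ((Λ^2/8*s₀)*r^j) := (ENNReal.ofReal_mul (by positivity)).symm
        _ ≤ famLeb (⋃ a, V j a) := le_iInf hleb_low
  · -- inscribed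
    intro i j hji S hS
    obtain ⟨b, U, hU, rfl⟩ := (hmemV i S).mp hS
    rcases Set.eq_empty_or_nonempty (Prop44.Fnl K t g (i,b,U)) with hemp | ⟨x, hx⟩
    · obtain ⟨x₀⟩ := hne
      obtain ⟨a, W, hW, hxW, -⟩ := deep x₀ j
      exact ⟨Prop44.Fnl K t g (j,a,W), (hmemV j _).mpr ⟨a, W, hW, rfl⟩, by
        rw [hemp]; exact Set.empty_subset _⟩
    · obtain ⟨a, W, hW, hxW, hdep⟩ := deep x j
      refine ⟨Prop44.Fnl K t g (j,a,W), (hmemV j _).mpr ⟨a, W, hW, rfl⟩, ?_⟩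
      intro y hy
      have hdy : edist x y ≤ ENNReal.ofReal (3 * M i) := by
        refine le_trans (EMetric.edist_le_diam_of_mem hx hy) ?_
        exact Prop44.fnl_diam K t g M hdiam hM0 hg0 hMg hMa (hGood i b U hU)
      have hlt : ENNReal.ofReal (3 * M i) < ENNReal.ofReal (t j) := by
        rw [ENNReal.ofReal_lt_ofReal_iff (ht0 j)]
        show 3 * M i < t j
        simp only [hM, ht]
        have h1 : r^i ≤ r^(j+1) := hpmono (j+1) i (by omega)
        have h2 : r^(j+1) = r^j * r := by ring
        have h3 : s₀*r^i ≤ s₀*(r^j*r) := mul_le_mul_of_nonneg_left (h1.trans_eq h2) hs₀0.le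
        have h4 : r^j * r < r^j * (Λ/20) := mul_lt_mul_of_pos_left hrΛ (hpow j)
        have h5 : s₀*(r^j*r) < s₀*(r^j*(Λ/20)) := mul_lt_mul_of_pos_left h4 hs₀0
        nlinarith [h3, h5, mul_pos (mul_pos hΛ0 hs₀0) (hpow j)]
      have hyW : y ∈ Prop44.sh t (j,a,W) :=
        Prop44.mem_of_edist_lt hdep (hdy.trans_lt hlt)
      exact Prop44.subset_fnl K t g (hGood j a W hW) hyW
  · -- separated families
    intro a S₁ hS₁ S₂ hS₂
    simp only [Set.mem_iUnion] at hS₁ hS₂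
    obtain ⟨j₁, hS₁⟩ := hS₁
    obtain ⟨j₂, hS₂⟩ := hS₂
    simp only [hV, Set.mem_setOf_eq] at hS₁ hS₂
    obtain ⟨b₁, hb₁, U₁, hU₁, rfl⟩ := hS₁
    obtain ⟨b₂, hb₂, U₂, hU₂, rfl⟩ := hS₂
    have hbb : b₁ = b₂ := Fin.castLE_injective hcast (hb₁.trans hb₂.symm)
    subst hbb
    by_cases hd : Disjoint (Prop44.Fnl K t g (j₁,b₁,U₁)) (Prop44.Fnl K t g (j₂,b₁,U₂))
    · exact Or.inl hd
    · rw [Set.not_disjoint_iff] at hd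
      obtain ⟨x, hx1, hx2⟩ := hd
      have hor := Prop44.fnl_sep K t g M D hdisj hdiam ht0 hDt hD0 hM0 hg0 hDg hDD
        (hGood j₁ b₁ U₁ hU₁) (hGood j₂ b₁ U₂ hU₂) rfl hx1 hx2
      rcases hor with h | h
      · exact Or.inr (Or.inl (Prop44.fnl_mono K t g h))
      · exact Or.inr (Or.inr (Prop44.fnl_mono K t g h))
end
end

section
/- Let U be an open covering of a metric space Z with positive local capacity, let f: Z → Z' be an η-quasi-symmetry onto a metric space Z', and let U' = f(U) = {f(U) : U ∈ U} be the image covering of Z'. Then the local capacities satisfy 1/cap_loc(U') ≤ 16·η(2/cap_loc(U)); in particular cap_loc(U') ≥ (16·η(2/cap_loc(U)))⁻¹ > 0. -/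
open Set Filter Metric ENNReal

noncomputable section

/-- The local capacity of an open covering:
`cap_loc(𝒰) = inf_z L(𝒰,z)/mesh(𝒰,z)`. -/
def capLocal {Z : Type*} [MetricSpace Z] (𝒰 : Set (Set Z)) : ℝ≥0∞ :=
  ⨅ z : Z, famLebAt 𝒰 z / famMeshAt 𝒰 z

/-- `η` is a homeomorphism of `[0,∞)` onto itself (a quasi-symmetry gauge). -/
def QSGauge (η : ℝ → ℝ) : Prop :=
  ContinuousOn η (Set.Ici 0) ∧ StrictMonoOn η (Set.Ici 0) ∧ η 0 = 0 ∧
    ∀ y : ℝ, 0 ≤ y → ∃ t : ℝ, 0 ≤ t ∧ η t = y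

/-- `f` is `η`-quasi-symmetric. -/
def QuasiSymmetricWith {X Y : Type*} [MetricSpace X] [MetricSpace Y] (η : ℝ → ℝ)
    (f : X → Y) : Prop :=
  (¬ ∀ x x' : X, f x = f x') ∧
    ∀ (x a b : X) (t : ℝ), 0 ≤ t → dist x a ≤ t * dist x b →
      dist (f x) (f a) ≤ η t * dist (f x) (f b)

/-- Auxiliary: the mesh of the image covering at `f z` is controlled by
`2·η(t)·edist (f z) (f y)` whenever every point of every member of `𝒰` containing `z`
is at distance at most `t · dist z y` from `z`. -/
lemma meshAt_image_le_aux {Z Z' : Type*} [MetricSpace Z] [MetricSpace Z'] {η : ℝ → ℝ}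
    {f : Z → Z'}
    (hqs : ∀ (x a b : Z) (t : ℝ), 0 ≤ t → dist x a ≤ t * dist x b →
      dist (f x) (f a) ≤ η t * dist (f x) (f b))
    (hinj : Function.Injective f) (𝒰 : Set (Set Z)) {z y : Z} {t : ℝ} (ht : 0 ≤ t)
    (hηt : 0 ≤ η t)
    (hbound : ∀ U ∈ 𝒰, z ∈ U → ∀ a ∈ U, dist z a ≤ t * dist z y) :
    famMeshAt (Set.image f '' 𝒰) (f z) ≤ ENNReal.ofReal (2 * η t) * edist (f z) (f y) := by
  refine iSup₂_le ?_
  rintro V ⟨U, hU, rfl⟩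
  refine iSup_le fun hfz => ?_
  have hz : z ∈ U := by
    obtain ⟨w, hw, hwz⟩ := hfz
    rwa [hinj hwz] at hw
  refine EMetric.diam_le ?_
  rintro p ⟨a, ha, rfl⟩ q ⟨b, hb, rfl⟩
  have hda := hqs z a y t ht (hbound U hU hz a ha)
  have hdb := hqs z b y t ht (hbound U hU hz b hb)
  have hab : dist (f a) (f b) ≤ 2 * η t * dist (f z) (f y) := by
    have htr := dist_triangle (f a) (f z) (f b)
    rw [dist_comm (f a) (f z)] at htr
    linarith
  calc edist (f a) (f b) = ENNReal.ofReal (dist (f a) (f b)) := edist_dist _ _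
    _ ≤ ENNReal.ofReal (2 * η t * dist (f z) (f y)) := ENNReal.ofReal_le_ofReal hab
    _ = ENNReal.ofReal (2 * η t) * ENNReal.ofReal (dist (f z) (f y)) :=
        ENNReal.ofReal_mul (by linarith)
    _ = _ := by rw [edist_dist]

/-- **Lemma 4.5.** Let `𝒰` be an open covering of `Z` with positive local capacity, let
`f : Z → Z'` be an `η`-quasi-symmetry onto `Z'` and `𝒰' = f(𝒰)`. Then
`1/cap_loc(𝒰') ≤ 16·η(2/cap_loc(𝒰))`; in particular `cap_loc(𝒰') > 0`. -/
theorem capLocal_image_qs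
    {Z Z' : Type*} [MetricSpace Z] [MetricSpace Z'] (η : ℝ → ℝ) (hη : QSGauge η)
    (f : Z → Z') (hf : QuasiSymmetricWith η f) (hbij : Function.Bijective f)
    (𝒰 : Set (Set Z)) (hcov : IsOpenCover 𝒰) (hpos : 0 < capLocal 𝒰) :
    (capLocal (Set.image f '' 𝒰))⁻¹ ≤
        ENNReal.ofReal (16 * η ((2 / capLocal 𝒰).toReal)) ∧
      0 < capLocal (Set.image f '' 𝒰) := by
  obtain ⟨hηc, hηmono, hη0, hηsurj⟩ := hη
  obtain ⟨hfnc, hqs⟩ := hf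
  push_neg at hfnc
  obtain ⟨x₀, x₁, hx01⟩ := hfnc
  have hx01' : x₀ ≠ x₁ := fun h => hx01 (by rw [h])
  -- η is nonnegative on [0,∞)
  have hηnn : ∀ t : ℝ, 0 ≤ t → 0 ≤ η t := by
    intro t htp
    rcases eq_or_lt_of_le htp with h | h
    · rw [← h, hη0]
    · have := hηmono (le_refl (0:ℝ)) (le_of_lt h) h
      linarith
  -- η 1 ≥ 1
  have hd01 : 0 < dist (f x₀) (f x₁) := dist_pos.2 hx01
  have hη1 : 1 ≤ η 1 := by
    have h := hqs x₀ x₁ x₁ 1 zero_le_one (by rw [one_mul])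
    nlinarith
  set c := capLocal 𝒰 with hc
  have hcne0 : c ≠ 0 := hpos.ne'
  -- mesh is positive and finite at every point
  have hmesh : ∀ z : Z, famMeshAt 𝒰 z ≠ 0 ∧ famMeshAt 𝒰 z ≠ ∞ := by
    intro z
    have h1 : c ≤ famLebAt 𝒰 z / famMeshAt 𝒰 z := iInf_le _ z
    constructor
    · intro h0
      have hL : famLebAt 𝒰 z = 0 :=
        le_antisymm (h0 ▸ min_le_right _ _) zero_le
      rw [hL, h0, ENNReal.zero_div] at h1
      exact hcne0 (le_antisymm h1 zero_le)
    · intro htop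
      rw [htop, ENNReal.div_top] at h1
      exact hcne0 (le_antisymm h1 zero_le)
  -- c ≤ 1, c ≠ ∞
  have hc1 : c ≤ 1 := by
    have h1 : c ≤ famLebAt 𝒰 x₀ / famMeshAt 𝒰 x₀ := iInf_le _ x₀
    refine h1.trans ?_
    refine (ENNReal.div_le_div_right (min_le_right _ _) _).trans ?_
    rw [ENNReal.div_self (hmesh x₀).1 (hmesh x₀).2]
  have hctop : c ≠ ∞ := fun h => by simp [h] at hc1
  have hcrpos : 0 < c.toReal := ENNReal.toReal_pos hcne0 hctop
  have hcr1 : c.toReal ≤ 1 := by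
    have := ENNReal.toReal_mono (by simp) hc1
    simpa using this
  set T := (2 / c).toReal with hT
  have hTval : T = 2 / c.toReal := by
    rw [hT, ENNReal.toReal_div]
    norm_num
  have hT2 : 2 ≤ T := by
    rw [hTval, le_div_iff₀ hcrpos]
    linarith
  have hT0 : (0:ℝ) ≤ T := by linarith
  have hηT1 : 1 ≤ η T := by
    have h1T : (1:ℝ) < T := by linarith
    have := hηmono (Set.mem_Ici.2 (by norm_num)) (Set.mem_Ici.2 (by linarith)) h1T
    linarith
  set K := ENNReal.ofReal (2 * η T) with hK
  have hK0 : K ≠ 0 := (ENNReal.ofReal_pos.2 (by linarith)).ne'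
  have hKtop : K ≠ ∞ := ENNReal.ofReal_ne_top
  have hK1 : 1 ≤ K := by
    rw [hK, ENNReal.one_le_ofReal]
    linarith
  -- the key pointwise estimate
  have hpoint : ∀ z : Z, K⁻¹ ≤
      famLebAt (Set.image f '' 𝒰) (f z) / famMeshAt (Set.image f '' 𝒰) (f z) := by
    intro z
    obtain ⟨hm0, hmtop⟩ := hmesh z
    set m := famMeshAt 𝒰 z with hm
    have hmr : 0 < m.toReal := ENNReal.toReal_pos hm0 hmtop
    have h1 : c ≤ famLebAt 𝒰 z / m := iInf_le _ z
    have hL : c * m ≤ famLebAt 𝒰 z :=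
      (ENNReal.le_div_iff_mul_le (Or.inl hm0) (Or.inl hmtop)).1 h1
    have hS : c * m ≤ ⨆ U ∈ 𝒰, EMetric.infEdist z Uᶜ := hL.trans (min_le_left _ _)
    have hcm0 : c * m ≠ 0 := mul_ne_zero hcne0 hm0
    have hcmtop : c * m ≠ ∞ := ENNReal.mul_ne_top hctop hmtop
    have hhalf : c * m / 2 < ⨆ U ∈ 𝒰, EMetric.infEdist z Uᶜ :=
      lt_of_lt_of_le (ENNReal.half_lt_self hcm0 hcmtop) hS
    rw [lt_iSup_iff] at hhalf
    obtain ⟨U₀, hhalf⟩ := hhalf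
    rw [lt_iSup_iff] at hhalf
    obtain ⟨hU₀, hinf⟩ := hhalf
    -- z ∈ U₀
    have hzU₀ : z ∈ U₀ := by
      by_contra h
      rw [show EMetric.infEdist z U₀ᶜ = 0 from EMetric.infEdist_zero_of_mem (by exact h : z ∈ U₀ᶜ)] at hinf
      exact (not_lt_of_ge zero_le) hinf
    -- real radius
    set r := (c * m / 2).toReal with hr
    have hrval : r = c.toReal * m.toReal / 2 := by
      rw [hr, ENNReal.toReal_div, ENNReal.toReal_mul]
      norm_num
    have hrpos : 0 < r := by rw [hrval]; positivity
    have hTr : T * r = m.toReal := by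
      rw [hTval, hrval]; field_simp
    -- distance to points outside U₀
    have hdist_out : ∀ y ∉ U₀, r ≤ dist z y := by
      intro y hy
      have h1 : c * m / 2 ≤ edist z y :=
        (le_of_lt hinf).trans (EMetric.infEdist_le_edist_of_mem hy)
      rw [dist_edist]
      exact ENNReal.toReal_mono (edist_ne_top z y) h1
    -- points of members containing z are within m.toReal of z
    have hdin : ∀ U ∈ 𝒰, z ∈ U → ∀ a ∈ U, dist z a ≤ m.toReal := by
      intro U hU hz a ha
      have h1 : edist z a ≤ m := by
        refine le_trans (EMetric.edist_le_diam_of_mem hz ha) ?_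
        rw [hm]
        exact le_iSup₂_of_le U hU (le_iSup_of_le hz le_rfl)
      rw [dist_edist]
      exact ENNReal.toReal_mono hmtop h1
    -- mesh of image covering is positive
    have hmesh'pos : famMeshAt (Set.image f '' 𝒰) (f z) ≠ 0 := by
      have hmpos : (0:ℝ≥0∞) < m := pos_iff_ne_zero.2 hm0
      rw [hm, famMeshAt, lt_iSup_iff] at hmpos
      obtain ⟨U, hmpos⟩ := hmpos
      rw [lt_iSup_iff] at hmpos
      obtain ⟨hU, hmpos⟩ := hmpos
      rw [lt_iSup_iff] at hmpos
      obtain ⟨hzU, hdU⟩ := hmpos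
      have hdfU : EMetric.diam (f '' U) ≠ 0 := by
        intro h0
        have hsub : (f '' U).Subsingleton := EMetric.diam_eq_zero_iff.1 h0
        have hUsub : U.Subsingleton := fun a ha b hb =>
          hbij.1 (hsub ⟨a, ha, rfl⟩ ⟨b, hb, rfl⟩)
        rw [show EMetric.diam U = 0 from EMetric.diam_subsingleton hUsub] at hdU
        exact lt_irrefl _ hdU
      intro h0
      apply hdfU
      refine le_antisymm ?_ zero_le
      rw [← h0, famMeshAt]
      exact le_iSup₂_of_le (f '' U) ⟨U, hU, rfl⟩ (le_iSup_of_le ⟨z, hzU, rfl⟩ le_rfl)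
    -- mesh of image covering is finite
    have hmesh'top : famMeshAt (Set.image f '' 𝒰) (f z) ≠ ∞ := by
      obtain ⟨y₀, hy₀⟩ : ∃ y₀ : Z, y₀ ≠ z := by
        rcases eq_or_ne z x₀ with h | h
        · exact ⟨x₁, fun hh => hx01' (by rw [← h, hh])⟩
        · exact ⟨x₀, fun hh => h hh.symm⟩
      have hdy₀ : 0 < dist z y₀ := dist_pos.2 (Ne.symm hy₀)
      set t₀ := m.toReal / dist z y₀ with ht₀
      have ht₀0 : 0 ≤ t₀ := by positivity
      have hbound : ∀ U ∈ 𝒰, z ∈ U → ∀ a ∈ U, dist z a ≤ t₀ * dist z y₀ := by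
        intro U hU hz a ha
        have := hdin U hU hz a ha
        rw [ht₀, div_mul_cancel₀ _ (ne_of_gt hdy₀)]
        exact this
      have := meshAt_image_le_aux hqs hbij.1 𝒰 ht₀0 (hηnn t₀ ht₀0) hbound
      intro htop
      rw [htop] at this
      exact (ENNReal.mul_ne_top ENNReal.ofReal_ne_top (edist_ne_top _ _))
        (le_antisymm le_top this)
    -- mesh of image covering is controlled outside f '' U₀
    have hmeshA : ∀ y ∉ U₀,
        famMeshAt (Set.image f '' 𝒰) (f z) ≤ K * edist (f z) (f y) := by
      intro y hy
      refine meshAt_image_le_aux hqs hbij.1 𝒰 hT0 (by linarith) ?_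
      intro U hU hz a ha
      have h1 := hdin U hU hz a ha
      have h2 := hdist_out y hy
      calc dist z a ≤ m.toReal := h1
        _ = T * r := hTr.symm
        _ ≤ T * dist z y := by nlinarith
    -- Lebesgue number estimate for the image covering
    have hS' : famMeshAt (Set.image f '' 𝒰) (f z) / K ≤
        ⨆ V ∈ Set.image f '' 𝒰, EMetric.infEdist (f z) Vᶜ := by
      refine le_iSup₂_of_le (f '' U₀) ⟨U₀, hU₀, rfl⟩ ?_
      erw [EMetric.le_infEdist]
      intro y' hy'
      obtain ⟨y, rfl⟩ := hbij.2 y'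
      have hyU : y ∉ U₀ := fun h => hy' ⟨y, h, rfl⟩
      rw [ENNReal.div_le_iff_le_mul (Or.inl hK0) (Or.inl hKtop)]
      rw [mul_comm]
      exact hmeshA y hyU
    have hL' : famMeshAt (Set.image f '' 𝒰) (f z) / K ≤
        famLebAt (Set.image f '' 𝒰) (f z) := by
      refine le_min hS' ?_
      rw [ENNReal.div_le_iff_le_mul (Or.inl hK0) (Or.inl hKtop)]
      exact le_mul_of_one_le_right' hK1
    rw [ENNReal.le_div_iff_mul_le (Or.inl hmesh'pos) (Or.inl hmesh'top)]
    rwa [← ENNReal.div_eq_inv_mul]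
  -- conclude
  have hcap : K⁻¹ ≤ capLocal (Set.image f '' 𝒰) := by
    refine le_iInf fun z' => ?_
    obtain ⟨z, rfl⟩ := hbij.2 z'
    exact hpoint z
  constructor
  · calc (capLocal (Set.image f '' 𝒰))⁻¹ ≤ (K⁻¹)⁻¹ := ENNReal.inv_le_inv.2 hcap
      _ = K := inv_inv K
      _ ≤ ENNReal.ofReal (16 * η T) := ENNReal.ofReal_le_ofReal (by nlinarith)
  · exact lt_of_lt_of_le (ENNReal.inv_pos.2 hKtop) hcap

end
end

section
/- Let X be a metric space, let U_j, j ∈ ℕ, be a sequence of open coverings of X such that each U_j is (n+1)-colored by one and the same color set A of cardinality n+1 (U_j = ∪_{a∈A} U_j^a), mesh(U_j) ≤ r^j for some 0 < r < 1, and for every a ∈ A the union U^a = ∪_{j∈ℕ} U_j^a is separated. Let f: X → Y be an η-quasi-symmetric map and for s > 0 put U(s) = {U ∈ ∪_j U_j : diam f(U) ≤ s}. Then for every s > 0 there exists a minimal family V ⊂ U(s), and every minimal family V ⊂ U(s) is an (n+1)-colored covering of X. -/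
open Set Filter Metric ENNReal

noncomputable section

/-- A family `𝒲 ⊆ 𝒜` is minimal if every `U ∈ 𝒜` is contained in some member of `𝒲`
and neither of two different members of `𝒲` is contained in the other. -/
def IsMinimalFam {X : Type*} (𝒜 𝒲 : Set (Set X)) : Prop :=
  𝒲 ⊆ 𝒜 ∧ (∀ U ∈ 𝒜, ∃ V ∈ 𝒲, U ⊆ V) ∧
    ∀ V ∈ 𝒲, ∀ V' ∈ 𝒲, V ⊆ V' → V = V'

/-- **Lemma 4.8.** For every `s > 0` there is a minimal family `𝒱 ⊆ 𝒰(s)`, and every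
minimal family `𝒱 ⊆ 𝒰(s)` is an `(n+1)`-colored covering of `X`. -/
theorem exists_minimal_family_and_colored_cover
    {X Y : Type*} [MetricSpace X] [MetricSpace Y] (n : ℕ)
    (r : ℝ) (hr0 : 0 < r) (hr1 : r < 1)
    (𝒱 : ℕ → Fin (n + 1) → Set (Set X))
    (hcov : ∀ j, IsOpenCover (⋃ a, 𝒱 j a))
    (hdisj : ∀ j a, (𝒱 j a).Pairwise Disjoint)
    (hmesh : ∀ j, famMesh (⋃ a, 𝒱 j a) ≤ ENNReal.ofReal (r ^ j))
    (hsep : ∀ a, SeparatedFam (⋃ j, 𝒱 j a))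
    (η : ℝ → ℝ) (hη : QSGauge η) (f : X → Y) (hf : QuasiSymmetricWith η f)
    (s : ℝ) (hs : 0 < s) :
    (∃ 𝒲 : Set (Set X),
      IsMinimalFam {U | (U ∈ ⋃ j, ⋃ a, 𝒱 j a) ∧
        EMetric.diam (f '' U) ≤ ENNReal.ofReal s} 𝒲) ∧
    ∀ 𝒲 : Set (Set X),
      IsMinimalFam {U | (U ∈ ⋃ j, ⋃ a, 𝒱 j a) ∧
        EMetric.diam (f '' U) ≤ ENNReal.ofReal s} 𝒲 →
      ⋃₀ 𝒲 = univ ∧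
        ∃ W : Fin (n + 1) → Set (Set X), 𝒲 = ⋃ a, W a ∧ ∀ a, (W a).Pairwise Disjoint := by
  classical
  set 𝒜 : Set (Set X) := {U | (U ∈ ⋃ j, ⋃ a, 𝒱 j a) ∧
      EMetric.diam (f '' U) ≤ ENNReal.ofReal s} with h𝒜def
  -- real-diameter bound for members of level `j`
  have hdiam : ∀ (j : ℕ) (U : Set X), U ∈ ⋃ a, 𝒱 j a →
      ∀ x ∈ U, ∀ y ∈ U, dist x y ≤ r ^ j := by
    intro j U hU x hx y hy
    have h1 : edist x y ≤ EMetric.diam U := EMetric.edist_le_diam_of_mem hx hy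
    have h2 : EMetric.diam U ≤ famMesh (⋃ a, 𝒱 j a) := by
      simp only [famMesh]
      exact le_iSup₂ (f := fun (U : Set X) (_ : U ∈ ⋃ a, 𝒱 j a) => EMetric.diam U) U hU
    have h3 := (h1.trans h2).trans (hmesh j)
    rw [edist_dist] at h3
    exact (ENNReal.ofReal_le_ofReal_iff (by positivity)).mp h3
  -- existence of maximal members above any member of 𝒜
  have hmax : ∀ U ∈ 𝒜, ∃ V ∈ 𝒜, U ⊆ V ∧ ∀ V' ∈ 𝒜, V ⊆ V' → V = V' := by
    intro U hU
    by_cases h1 : ∃ V ∈ 𝒜, U ⊂ V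
    · obtain ⟨V1, hV1, hUV1⟩ := h1
      by_cases h2 : ∃ V ∈ 𝒜, V1 ⊂ V
      · obtain ⟨V2, hV2, hV12⟩ := h2
        obtain ⟨x1, hx1V1, hx1U⟩ := Set.exists_of_ssubset hUV1
        obtain ⟨x2, hx2V2, hx2V1⟩ := Set.exists_of_ssubset hV12
        have hne : x1 ≠ x2 := fun h => hx2V1 (h ▸ hx1V1)
        have hd : 0 < dist x1 x2 := dist_pos.mpr hne
        obtain ⟨N, hN⟩ := exists_pow_lt_of_lt_one hd hr1
        set T : Set (Set X) := {V | V ∈ 𝒜 ∧ V2 ⊆ V} with hTdef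
        -- every member of T lives in some 𝒱 j a with j < N
        have hlevel : ∀ V ∈ T, ∃ p : Fin N × Fin (n + 1), V ∈ 𝒱 p.1 p.2 := by
          rintro V ⟨hV𝒜, hV2V⟩
          obtain ⟨j, hj⟩ := mem_iUnion.mp hV𝒜.1
          obtain ⟨a, ha⟩ := mem_iUnion.mp hj
          have hx1V : x1 ∈ V := hV2V (hV12.1 hx1V1)
          have hx2V : x2 ∈ V := hV2V hx2V2
          have hdr : dist x1 x2 ≤ r ^ j :=
            hdiam j V (mem_iUnion.mpr ⟨a, ha⟩) x1 hx1V x2 hx2V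
          have hjN : j < N :=
            (pow_lt_pow_iff_right_of_lt_one₀ hr0 hr1).mp (lt_of_lt_of_le hN hdr)
          exact ⟨(⟨j, hjN⟩, a), ha⟩
        choose φ hφ using hlevel
        have hx1T : ∀ (V) (hV : V ∈ T), x1 ∈ V := fun V hV => hV.2 (hV12.1 hx1V1)
        have hinj : Function.Injective (fun V : T => φ V.1 V.2) := by
          rintro ⟨V, hV⟩ ⟨V', hV'⟩ h
          simp only at h
          have h1 := hφ V hV
          have h2 := hφ V' hV'
          rw [h] at h1
          ext1
          by_contra hne
          exact Set.disjoint_left.mp (hdisj _ _ h1 h2 hne) (hx1T V hV) (hx1T V' hV')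
        haveI : Finite ↥T := Finite.of_injective _ hinj
        have hTfin : T.Finite := T.toFinite
        obtain ⟨V, hVT, hVmax⟩ :=
          Set.Finite.exists_maximalFor id T hTfin ⟨V2, hV2, subset_rfl⟩
        refine ⟨V, hVT.1, (hUV1.1.trans hV12.1).trans hVT.2, fun V' hV' hVV' => ?_⟩
        exact le_antisymm hVV' (hVmax ⟨hV', hVT.2.trans hVV'⟩ hVV')
      · push_neg at h2
        refine ⟨V1, hV1, hUV1.1, fun V' hV' hVV' => ?_⟩
        by_contra hne
        exact h2 V' hV' ⟨hVV', fun h => hne (le_antisymm hVV' h)⟩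
    · push_neg at h1
      refine ⟨U, hU, subset_rfl, fun V' hV' hVV' => ?_⟩
      by_contra hne
      exact h1 V' hV' ⟨hVV', fun h => hne (le_antisymm hVV' h)⟩
  -- quasi-symmetry: every point lies in some member of 𝒜
  have hcovU : ∀ x : X, ∃ U ∈ 𝒜, x ∈ U := by
    intro x
    have hnc := hf.1
    push_neg at hnc
    obtain ⟨p, q, hpq⟩ := hnc
    have hb : ∃ b : X, f x ≠ f b := by
      by_cases h : f x = f p
      · exact ⟨q, fun hq => hpq (h ▸ hq ▸ rfl)⟩
      · exact ⟨p, h⟩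
    obtain ⟨b, hDb⟩ := hb
    set D := dist (f x) (f b) with hDdef
    have hD : 0 < D := dist_pos.mpr hDb
    have hxb : 0 < dist x b := dist_pos.mpr (fun h => hDb (by rw [h]))
    set ε := s / (2 * D) with hεdef
    have hε : 0 < ε := by positivity
    have hcont : ContinuousWithinAt η (Set.Ici 0) 0 := hη.1 0 Set.self_mem_Ici
    rw [Metric.continuousWithinAt_iff] at hcont
    obtain ⟨δ, hδ, hδ'⟩ := hcont ε hε
    obtain ⟨j, hj⟩ := exists_pow_lt_of_lt_one (mul_pos hδ hxb) hr1
    have hx' : x ∈ ⋃₀ (⋃ a, 𝒱 j a) := (hcov j).2 ▸ mem_univ x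
    obtain ⟨U, hU, hxU⟩ := hx'
    set t := r ^ j / dist x b with htdef
    have ht0 : 0 ≤ t := by positivity
    have htδ : dist t 0 < δ := by
      rw [Real.dist_0_eq_abs, abs_of_nonneg ht0]
      rw [htdef, div_lt_iff₀ hxb]
      linarith [hj]
    have hηt : η t < ε := by
      have h := hδ' (Set.mem_Ici.mpr ht0) htδ
      rw [hη.2.2.1, Real.dist_0_eq_abs] at h
      exact lt_of_le_of_lt (le_abs_self _) h
    have key : ∀ u ∈ U, dist (f x) (f u) ≤ η t * D := by
      intro u hu
      apply hf.2 x u b t ht0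
      have h := hdiam j U hU x hxU u hu
      rw [htdef, div_mul_cancel₀ _ (ne_of_gt hxb)]
      exact h
    refine ⟨U, ⟨?_, ?_⟩, hxU⟩
    · exact mem_iUnion.mpr ⟨j, hU⟩
    · apply EMetric.diam_le
      rintro _ ⟨u, hu, rfl⟩ _ ⟨v, hv, rfl⟩
      rw [edist_dist]
      apply ENNReal.ofReal_le_ofReal
      calc dist (f u) (f v) ≤ dist (f u) (f x) + dist (f x) (f v) := dist_triangle _ _ _
        _ = dist (f x) (f u) + dist (f x) (f v) := by rw [dist_comm (f u) (f x)]
        _ ≤ η t * D + η t * D := add_le_add (key u hu) (key v hv)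
        _ ≤ ε * D + ε * D := by
            have := mul_le_mul_of_nonneg_right hηt.le hD.le
            linarith
        _ = s := by field_simp [hεdef]; rw [hεdef]; field_simp [hD.ne']; norm_num
  constructor
  · -- existence of a minimal family
    refine ⟨{V | V ∈ 𝒜 ∧ ∀ V' ∈ 𝒜, V ⊆ V' → V = V'}, ?_, ?_, ?_⟩
    · intro V hV; exact hV.1
    · intro U hU
      obtain ⟨V, hV, hUV, hVmax⟩ := hmax U hU
      exact ⟨V, ⟨hV, hVmax⟩, hUV⟩
    · intro V hV V' hV' hVV'
      exact hV.2 V' hV'.1 hVV'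
  · -- every minimal family is a colored cover
    intro 𝒲 h𝒲
    constructor
    · apply Set.eq_univ_iff_forall.mpr
      intro x
      obtain ⟨U, hU, hxU⟩ := hcovU x
      obtain ⟨V, hV, hUV⟩ := h𝒲.2.1 U hU
      exact ⟨V, hV, hUV hxU⟩
    · refine ⟨fun a => {V | V ∈ 𝒲 ∧ V ∈ ⋃ j, 𝒱 j a}, ?_, ?_⟩
      · ext V
        simp only [mem_iUnion, mem_setOf_eq]
        constructor
        · intro hV
          have := (h𝒲.1 hV).1
          obtain ⟨j, hj⟩ := mem_iUnion.mp this
          obtain ⟨a, ha⟩ := mem_iUnion.mp hj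
          exact ⟨a, hV, ⟨j, ha⟩⟩
        · rintro ⟨a, hV, _⟩; exact hV
      · intro a V hV V' hV' hne
        rcases hsep a V hV.2 V' hV'.2 with h | h | h
        · exact h
        · exact absurd (h𝒲.2.2 V hV.1 V' hV'.1 h) hne
        · exact absurd (h𝒲.2.2 V' hV'.1 V hV.1 h).symm hne
end
end

section
/- Every visual Gromov hyperbolic metric space X is roughly similar to a subspace of the hyperbolic cone Co(∂∞X) over its boundary at infinity equipped with a visual metric: there exist λ > 0, a constant C ≥ 0, and a map F: X → Co(∂∞X) such that |λ·|xx'| − |F(x)F(x')|| ≤ C for all x, x' ∈ X. -/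
open Set Filter Metric ENNReal

noncomputable section

universe u v w

/-- The Gromov product of `x`, `y` with respect to `o`. -/
def gromovProd {X : Type*} [MetricSpace X] (o x y : X) : ℝ :=
  (dist x o + dist y o - dist x y) / 2

/-- A sequence converges to infinity. -/
def ConvInf {X : Type*} [MetricSpace X] (o : X) (u : ℕ → X) : Prop :=
  Filter.Tendsto (fun p : ℕ × ℕ => gromovProd o (u p.1) (u p.2)) Filter.atTop Filter.atTop

/-- Equivalence of sequences converging to infinity. -/
def BdryRel {X : Type*} [MetricSpace X] (o : X) (u v : {u : ℕ → X // ConvInf o u}) : Prop :=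
  Filter.Tendsto (fun i => gromovProd o (u.1 i) (v.1 i)) Filter.atTop Filter.atTop

/-- The boundary at infinity of `X` (with respect to the base point `o`). -/
def Bdry (X : Type u) [MetricSpace X] (o : X) : Type u := Quot (BdryRel o)

/-- The Gromov product of two boundary points. -/
def gpBdry {X : Type u} [MetricSpace X] (o : X) (ξ ξ' : Bdry X o) : ℝ≥0∞ :=
  ⨅ (u : {u : ℕ → X // ConvInf o u}) (_ : Quot.mk (BdryRel o) u = ξ)
    (v : {u : ℕ → X // ConvInf o u}) (_ : Quot.mk (BdryRel o) v = ξ'),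
    Filter.liminf (fun i => ENNReal.ofReal (gromovProd o (u.1 i) (v.1 i))) Filter.atTop

/-- The Gromov product of a point and a boundary point. -/
def gpPtBdry {X : Type u} [MetricSpace X] (o : X) (x : X) (ξ : Bdry X o) : ℝ≥0∞ :=
  ⨅ (u : {u : ℕ → X // ConvInf o u}) (_ : Quot.mk (BdryRel o) u = ξ),
    Filter.liminf (fun i => ENNReal.ofReal (gromovProd o x (u.1 i))) Filter.atTop

/-- `a^{-p}` for `p ∈ [0,∞]`, used in the definition of visual metrics. -/
def visualGauge (a : ℝ) (p : ℝ≥0∞) : ℝ≥0∞ :=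
  if p = ⊤ then 0 else ENNReal.ofReal (a ^ (-p.toReal))

lemma gp_comm {X : Type*} [MetricSpace X] (o x y : X) :
    gromovProd o x y = gromovProd o y x := by
  unfold gromovProd; rw [dist_comm x y]; ring

lemma gp_nonneg {X : Type*} [MetricSpace X] (o x y : X) : 0 ≤ gromovProd o x y := by
  have h := dist_triangle x o y
  have h2 : dist o y = dist y o := dist_comm o y
  unfold gromovProd; linarith

lemma gp_le_left {X : Type*} [MetricSpace X] (o x y : X) : gromovProd o x y ≤ dist x o := by
  have h := dist_triangle y x o
  have h2 : dist y x = dist x y := dist_comm y x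
  unfold gromovProd; linarith

lemma bdry_est {X : Type u} [MetricSpace X] {o : X} {δ D : ℝ} (hδ : 0 ≤ δ) (hD : 0 < D)
    (hhyp : ∀ x y z : X, min (gromovProd o x y) (gromovProd o y z) - δ ≤ gromovProd o x z)
    {x x' : X} {ξ ξ' : Bdry X o}
    (hx : ENNReal.ofReal (dist x o) ≤ gpPtBdry o x ξ + ENNReal.ofReal D)
    (hx' : ENNReal.ofReal (dist x' o) ≤ gpPtBdry o x' ξ' + ENNReal.ofReal D) :
    ENNReal.ofReal (gromovProd o x x' - (D + 2*δ)) ≤ gpBdry o ξ ξ' ∧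
    min (ENNReal.ofReal (dist x o - D))
      (min (gpBdry o ξ ξ') (ENNReal.ofReal (dist x' o - D)))
      ≤ ENNReal.ofReal (gromovProd o x x' + 2*δ) := by
  obtain ⟨u, hu⟩ := Quot.exists_rep ξ
  obtain ⟨v, hv⟩ := Quot.exists_rep ξ'
  constructor
  · -- lower bound on gpBdry
    refine le_iInf fun u' => le_iInf fun hu' => le_iInf fun v' => le_iInf fun hv' => ?_
    set L2 := Filter.liminf
        (fun i => ENNReal.ofReal (gromovProd o (u'.1 i) (v'.1 i))) Filter.atTop with hL2def
    by_contra hcon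
    push_neg at hcon
    obtain ⟨b, hb1, hb2⟩ := exists_between hcon
    -- facts about b
    have hbtop : b ≠ ⊤ := (hb2.trans_le le_top).ne
    have hbr : b.toReal < gromovProd o x x' - (D + 2*δ) :=
      (ENNReal.lt_ofReal_iff_toReal_lt hbtop).1 hb2
    have hbr0 : 0 ≤ b.toReal := ENNReal.toReal_nonneg
    -- the liminf lower bounds from visuality
    have hL1 : ENNReal.ofReal (dist x o - D) ≤
        Filter.liminf (fun i => ENNReal.ofReal (gromovProd o x (u'.1 i))) Filter.atTop := by
      have hA : gpPtBdry o x ξ ≤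
          Filter.liminf (fun i => ENNReal.ofReal (gromovProd o x (u'.1 i))) Filter.atTop :=
        iInf_le_of_le u' (iInf_le_of_le hu' le_rfl)
      rw [ENNReal.ofReal_sub _ hD.le]
      exact tsub_le_iff_right.mpr (hx.trans (add_le_add hA le_rfl))
    have hL3 : ENNReal.ofReal (dist x' o - D) ≤
        Filter.liminf (fun i => ENNReal.ofReal (gromovProd o x' (v'.1 i))) Filter.atTop := by
      have hA : gpPtBdry o x' ξ' ≤
          Filter.liminf (fun i => ENNReal.ofReal (gromovProd o x' (v'.1 i))) Filter.atTop :=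
        iInf_le_of_le v' (iInf_le_of_le hv' le_rfl)
      rw [ENNReal.ofReal_sub _ hD.le]
      exact tsub_le_iff_right.mpr (hx'.trans (add_le_add hA le_rfl))
    -- p is big
    have hpx : gromovProd o x x' ≤ dist x o := gp_le_left o x x'
    have hpx' : gromovProd o x x' ≤ dist x' o := by
      rw [gp_comm]; exact gp_le_left o x' x
    set β := ENNReal.ofReal (b.toReal + 2*δ) with hβdef
    have hβ1 : β < Filter.liminf
        (fun i => ENNReal.ofReal (gromovProd o x (u'.1 i))) Filter.atTop := by
      refine lt_of_lt_of_le ?_ hL1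
      exact ENNReal.ofReal_lt_ofReal_iff (by linarith) |>.2 (by linarith)
    have hβ3 : β < Filter.liminf
        (fun i => ENNReal.ofReal (gromovProd o x' (v'.1 i))) Filter.atTop := by
      refine lt_of_lt_of_le ?_ hL3
      exact ENNReal.ofReal_lt_ofReal_iff (by linarith) |>.2 (by linarith)
    have h1 := Filter.eventually_lt_of_lt_liminf hβ1
    have h3 := Filter.eventually_lt_of_lt_liminf hβ3
    have hev : ∀ᶠ i in Filter.atTop, b ≤ ENNReal.ofReal (gromovProd o (u'.1 i) (v'.1 i)) := by
      filter_upwards [h1, h3] with i hi1 hi3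
      have hr1 : b.toReal + 2*δ < gromovProd o x (u'.1 i) := by
        by_contra hle
        exact absurd (ENNReal.ofReal_le_ofReal (not_lt.1 hle)) (not_le.2 hi1)
      have hr3 : b.toReal + 2*δ < gromovProd o x' (v'.1 i) := by
        by_contra hle
        exact absurd (ENNReal.ofReal_le_ofReal (not_lt.1 hle)) (not_le.2 hi3)
      have m1 := hhyp (u'.1 i) x (v'.1 i)
      have m2 := hhyp x x' (v'.1 i)
      have hcomm : gromovProd o (u'.1 i) x = gromovProd o x (u'.1 i) := gp_comm o _ _
      have hgxv : b.toReal + δ < gromovProd o x (v'.1 i) := by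
        have h := lt_min (show b.toReal + 2*δ < gromovProd o x x' by linarith) hr3
        linarith
      have hfin : b.toReal ≤ gromovProd o (u'.1 i) (v'.1 i) := by
        have h := lt_min (show b.toReal + δ < gromovProd o (u'.1 i) x by rw [hcomm]; linarith) hgxv
        linarith
      calc b = ENNReal.ofReal b.toReal := (ENNReal.ofReal_toReal hbtop).symm
        _ ≤ _ := ENNReal.ofReal_le_ofReal hfin
    exact absurd (Filter.le_liminf_of_le (by isBoundedDefault) hev) (not_le.2 hb1)
  · -- upper bound via min
    set B := gpBdry o ξ ξ' with hBdef
    set L2 := Filter.liminf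
        (fun i => ENNReal.ofReal (gromovProd o (u.1 i) (v.1 i))) Filter.atTop with hL2def
    have hB2 : B ≤ L2 :=
      iInf_le_of_le u (iInf_le_of_le hu (iInf_le_of_le v (iInf_le_of_le hv le_rfl)))
    have hL1 : ENNReal.ofReal (dist x o - D) ≤
        Filter.liminf (fun i => ENNReal.ofReal (gromovProd o x (u.1 i))) Filter.atTop := by
      have hA : gpPtBdry o x ξ ≤ _ := iInf_le_of_le u (iInf_le_of_le hu le_rfl)
      rw [ENNReal.ofReal_sub _ hD.le]
      exact tsub_le_iff_right.mpr (hx.trans (add_le_add hA le_rfl))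
    have hL3 : ENNReal.ofReal (dist x' o - D) ≤
        Filter.liminf (fun i => ENNReal.ofReal (gromovProd o x' (v.1 i))) Filter.atTop := by
      have hA : gpPtBdry o x' ξ' ≤ _ := iInf_le_of_le v (iInf_le_of_le hv le_rfl)
      rw [ENNReal.ofReal_sub _ hD.le]
      exact tsub_le_iff_right.mpr (hx'.trans (add_le_add hA le_rfl))
    by_contra hcon
    push_neg at hcon
    set R := ENNReal.ofReal (gromovProd o x x' + 2*δ) with hRdef
    have hm1 : R < ENNReal.ofReal (dist x o - D) := lt_of_lt_of_le hcon (min_le_left _ _)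
    have hm2 : R < B := lt_of_lt_of_le hcon ((min_le_right _ _).trans (min_le_left _ _))
    have hm3 : R < ENNReal.ofReal (dist x' o - D) :=
      lt_of_lt_of_le hcon ((min_le_right _ _).trans (min_le_right _ _))
    have e1 := Filter.eventually_lt_of_lt_liminf (lt_of_lt_of_le hm1 hL1)
    have e2 := Filter.eventually_lt_of_lt_liminf (lt_of_lt_of_le (hm2.trans_le hB2) le_rfl)
    have e3 := Filter.eventually_lt_of_lt_liminf (lt_of_lt_of_le hm3 hL3)
    obtain ⟨i, ⟨hi1, hi2⟩, hi3⟩ := ((e1.and e2).and e3).exists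
    have p2δ : (0:ℝ) ≤ gromovProd o x x' + 2*δ := by
      have := gp_nonneg o x x'; linarith
    have hr1 : gromovProd o x x' + 2*δ < gromovProd o x (u.1 i) := by
      by_contra hle
      exact absurd (ENNReal.ofReal_le_ofReal (not_lt.1 hle)) (not_le.2 hi1)
    have hr2 : gromovProd o x x' + 2*δ < gromovProd o (u.1 i) (v.1 i) := by
      by_contra hle
      exact absurd (ENNReal.ofReal_le_ofReal (not_lt.1 hle)) (not_le.2 hi2)
    have hr3 : gromovProd o x x' + 2*δ < gromovProd o x' (v.1 i) := by
      by_contra hle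
      exact absurd (ENNReal.ofReal_le_ofReal (not_lt.1 hle)) (not_le.2 hi3)
    have m1 := hhyp x (u.1 i) x'
    have m2 := hhyp (u.1 i) (v.1 i) x'
    have hcomm : gromovProd o (v.1 i) x' = gromovProd o x' (v.1 i) := gp_comm o _ _
    have hlt2 : gromovProd o x x' + δ < gromovProd o (u.1 i) x' := by
      have h := lt_min hr2 (show gromovProd o x x' + 2*δ < gromovProd o (v.1 i) x' by
        rw [gp_comm o (v.1 i) x']; exact hr3)
      linarith
    have hfin : gromovProd o x x' < gromovProd o x x' := by
      have h := lt_min (show gromovProd o x x' + δ < gromovProd o x (u.1 i) by linarith) hlt2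
      linarith
    exact absurd hfin (lt_irrefl _)

lemma exp_upper_est {t t' q k KK m dF : ℝ}
    (ht0 : 0 ≤ t) (ht'0 : 0 ≤ t') (hq0 : 0 ≤ q) (hqt : q ≤ t) (hqt' : q ≤ t')
    (hk0 : 0 ≤ k) (hkup : k ≤ KK * Real.exp (-q)) (hKK : 0 ≤ KK)
    (hm : m = t + t' - 2*q) (hdF0 : 0 ≤ dF)
    (hcosh : Real.cosh dF =
      Real.cosh (t - t') + Real.sinh t * Real.sinh t' * (1 - Real.cos k)) :
    dF ≤ m + Real.log (2 * (1 + KK^2/8)) := by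
  have hS : Real.sinh t * Real.sinh t' ≤ Real.exp t * Real.exp t' / 4 := by
    have h1 : Real.sinh t ≤ Real.exp t / 2 := by
      rw [Real.sinh_eq]; have := (Real.exp_pos (-t)).le; linarith
    have h2 : Real.sinh t' ≤ Real.exp t' / 2 := by
      rw [Real.sinh_eq]; have := (Real.exp_pos (-t')).le; linarith
    calc Real.sinh t * Real.sinh t' ≤ (Real.exp t / 2) * (Real.exp t' / 2) :=
          mul_le_mul h1 h2 (Real.sinh_nonneg_iff.2 ht'0) (by positivity)
      _ = Real.exp t * Real.exp t' / 4 := by ring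
  have h1mc : 1 - Real.cos k ≤ k^2/2 := by
    have := Real.one_sub_sq_div_two_le_cos (x := k)
    linarith
  have hk2 : k^2 ≤ KK^2 * (Real.exp (-q) * Real.exp (-q)) := by
    have h := mul_self_le_mul_self hk0 hkup
    calc k^2 = k * k := sq k
      _ ≤ (KK * Real.exp (-q)) * (KK * Real.exp (-q)) := h
      _ = KK^2 * (Real.exp (-q) * Real.exp (-q)) := by ring
  have hexpm : Real.exp t * Real.exp t' * (Real.exp (-q) * Real.exp (-q))
      = Real.exp m := by
    rw [← Real.exp_add, ← Real.exp_add, ← Real.exp_add, hm]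
    congr 1
    ring
  have hcoshtt : Real.cosh (t - t') ≤ Real.exp m := by
    rw [Real.cosh_eq]
    have e1 : Real.exp (t - t') ≤ Real.exp m := Real.exp_le_exp.2 (by rw [hm]; linarith)
    have e2 : Real.exp (-(t - t')) ≤ Real.exp m := Real.exp_le_exp.2 (by rw [hm]; linarith)
    linarith
  have hSnn : 0 ≤ Real.sinh t * Real.sinh t' :=
    mul_nonneg (Real.sinh_nonneg_iff.2 ht0) (Real.sinh_nonneg_iff.2 ht'0)
  have hup : Real.cosh dF ≤ (1 + KK^2/8) * Real.exp m := by
    rw [hcosh]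
    have hcnn : 0 ≤ 1 - Real.cos k := by linarith [Real.cos_le_one k]
    have step : Real.sinh t * Real.sinh t' * (1 - Real.cos k)
        ≤ (Real.exp t * Real.exp t' / 4) * (k^2/2) :=
      mul_le_mul hS h1mc hcnn (by positivity)
    have step2 : (Real.exp t * Real.exp t' / 4) * (k^2/2)
        ≤ (Real.exp t * Real.exp t' / 4)
          * (KK^2 * (Real.exp (-q) * Real.exp (-q)) / 2) :=
      mul_le_mul_of_nonneg_left (by linarith) (by positivity)
    have hid : (Real.exp t * Real.exp t' / 4)
        * (KK^2 * (Real.exp (-q) * Real.exp (-q)) / 2)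
        = KK^2/8 * Real.exp m := by
      rw [← hexpm]; ring
    rw [hid] at step2
    linarith
  have hfinal : Real.exp dF ≤ Real.exp (m + Real.log (2 * (1 + KK^2/8))) := by
    rw [Real.exp_add, Real.exp_log (by positivity : (0:ℝ) < 2 * (1 + KK^2/8))]
    have hexpdf : Real.exp dF ≤ 2 * Real.cosh dF := by
      rw [Real.cosh_eq]; have := (Real.exp_pos (-dF)).le; linarith
    calc Real.exp dF ≤ 2 * Real.cosh dF := hexpdf
      _ ≤ 2 * ((1 + KK^2/8) * Real.exp m) := by linarith
      _ = Real.exp m * (2 * (1 + KK^2/8)) := by ring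
  exact Real.exp_le_exp.1 hfinal

lemma exp_lower_est {t t' q k KK m dF : ℝ}
    (ht1 : 1 ≤ t) (ht'1 : 1 ≤ t') (hq0 : 0 ≤ q)
    (hk0 : 0 ≤ k) (hkπ : k ≤ Real.pi) (hklow : KK * Real.exp (-q) ≤ k) (hKK : 0 < KK)
    (hm : m = t + t' - 2*q) (hdF0 : 0 ≤ dF)
    (hcosh : Real.cosh dF =
      Real.cosh (t - t') + Real.sinh t * Real.sinh t' * (1 - Real.cos k)) :
    m + Real.log (KK^2/(8*Real.pi^2)) ≤ dF := by
  have hπ := Real.pi_pos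
  have hsinht : Real.exp t / 4 ≤ Real.sinh t := by
    rw [Real.sinh_eq]
    have h2t : (3:ℝ) ≤ Real.exp (2*t) := by
      have := Real.add_one_le_exp (2*t); linarith
    have hid : Real.exp (-t) * Real.exp (2*t) = Real.exp t := by
      rw [← Real.exp_add]; ring_nf
    have h3 : Real.exp (-t) * 3 ≤ Real.exp (-t) * Real.exp (2*t) :=
      mul_le_mul_of_nonneg_left h2t (Real.exp_pos (-t)).le
    rw [hid] at h3
    linarith [(Real.exp_pos (-t)).le]
  have hsinht' : Real.exp t' / 4 ≤ Real.sinh t' := by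
    rw [Real.sinh_eq]
    have h2t : (3:ℝ) ≤ Real.exp (2*t') := by
      have := Real.add_one_le_exp (2*t'); linarith
    have hid : Real.exp (-t') * Real.exp (2*t') = Real.exp t' := by
      rw [← Real.exp_add]; ring_nf
    have h3 : Real.exp (-t') * 3 ≤ Real.exp (-t') * Real.exp (2*t') :=
      mul_le_mul_of_nonneg_left h2t (Real.exp_pos (-t')).le
    rw [hid] at h3
    linarith [(Real.exp_pos (-t')).le]
  have h1mc : 2/Real.pi^2 * k^2 ≤ 1 - Real.cos k := by
    have := Real.cos_le_one_sub_mul_cos_sq (x := k) (by rwa [abs_of_nonneg hk0])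
    linarith
  have hk2 : (KK * Real.exp (-q))^2 ≤ k^2 := by
    have hnn : 0 ≤ KK * Real.exp (-q) := by positivity
    have h := mul_self_le_mul_self hnn hklow
    calc (KK * Real.exp (-q))^2 = (KK * Real.exp (-q)) * (KK * Real.exp (-q)) := sq _
      _ ≤ k * k := h
      _ = k^2 := (sq k).symm
  have hexpm : Real.exp t * Real.exp t' * (Real.exp (-q) * Real.exp (-q))
      = Real.exp m := by
    rw [← Real.exp_add, ← Real.exp_add, ← Real.exp_add, hm]
    congr 1
    ring
  have step1 : 2/Real.pi^2 * (KK * Real.exp (-q))^2 ≤ 1 - Real.cos k :=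
    le_trans (mul_le_mul_of_nonneg_left hk2 (by positivity)) h1mc
  have hs1 : (0:ℝ) ≤ Real.sinh t := Real.sinh_nonneg_iff.2 (by linarith)
  have hs2 : (0:ℝ) ≤ Real.sinh t' := Real.sinh_nonneg_iff.2 (by linarith)
  have m1 : (Real.exp t / 4) * (Real.exp t' / 4) ≤ Real.sinh t * Real.sinh t' :=
    mul_le_mul hsinht hsinht' (by positivity) hs1
  have step2 : (Real.exp t / 4) * (Real.exp t' / 4) * (2/Real.pi^2 * (KK * Real.exp (-q))^2)
      ≤ Real.sinh t * Real.sinh t' * (1 - Real.cos k) :=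
    mul_le_mul m1 step1 (by positivity) (mul_nonneg hs1 hs2)
  have hident : (Real.exp t / 4) * (Real.exp t' / 4) * (2/Real.pi^2 * (KK * Real.exp (-q))^2)
      = KK^2/(8*Real.pi^2) * Real.exp m := by
    rw [← hexpm]
    field_simp
    ring
  rw [hident] at step2
  have hlo : KK^2/(8*Real.pi^2) * Real.exp m ≤ Real.cosh dF := by
    rw [hcosh]
    have hcoshnn : 0 < Real.cosh (t - t') := Real.cosh_pos _
    linarith
  have hcoshle : Real.cosh dF ≤ Real.exp dF := by
    rw [Real.cosh_eq]
    have h1 : Real.exp (-dF) ≤ Real.exp dF := Real.exp_le_exp.2 (by linarith)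
    linarith
  have hfinal : Real.exp (m + Real.log (KK^2/(8*Real.pi^2))) ≤ Real.exp dF := by
    rw [Real.exp_add, Real.exp_log (by positivity : (0:ℝ) < KK^2/(8*Real.pi^2))]
    calc Real.exp m * (KK^2/(8*Real.pi^2)) = KK^2/(8*Real.pi^2) * Real.exp m := by ring
      _ ≤ Real.cosh dF := hlo
      _ ≤ Real.exp dF := hcoshle
  exact Real.exp_le_exp.1 hfinal


set_option maxHeartbeats 2000000 in
open Real in
/-- **Proposition 6.2.** Every visual Gromov hyperbolic space `X` is roughly similar
to a subspace of the hyperbolic cone over its boundary at infinity taken with a visual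
metric: there are `λ > 0`, `C ≥ 0` and a map `F : X → Co(∂∞X)` with
`|λ·|xx'| − |F(x)F(x')|| ≤ C` for all `x, x' ∈ X`. Here `(Z, dist)` is the boundary
`∂∞X` with a visual metric (via the identification `φ`), and `Y` together with `c` is
the hyperbolic cone over `Z`. -/
theorem visual_hyperbolic_roughly_similar_to_cone
    {X : Type u} [MetricSpace X] (o : X) (δ : ℝ) (hδ : 0 ≤ δ)
    (hhyp : ∀ x y z : X,
      min (gromovProd o x y) (gromovProd o y z) - δ ≤ gromovProd o x z)
    (hvisual : ∃ D : ℝ, 0 < D ∧ ∀ x : X, ∃ ξ : Bdry X o,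
      ENNReal.ofReal (dist x o) ≤ gpPtBdry o x ξ + ENNReal.ofReal D)
    {Z : Type v} [MetricSpace Z] (φ : Z ≃ Bdry X o)
    (hvm : ∃ a c₁ c₂ : ℝ, 1 < a ∧ 0 < c₁ ∧ 0 < c₂ ∧ ∀ z z' : Z,
      ENNReal.ofReal c₁ * visualGauge a (gpBdry o (φ z) (φ z')) ≤ edist z z' ∧
      edist z z' ≤ ENNReal.ofReal c₂ * visualGauge a (gpBdry o (φ z) (φ z')))
    {Y : Type w} [MetricSpace Y] (c : Z → ℝ → Y)
    (hsurj : ∀ y : Y, ∃ z t, 0 ≤ t ∧ c z t = y)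
    (hformula : ∀ (z z' : Z) (t t' : ℝ), 0 ≤ t → 0 ≤ t' →
      Real.cosh (dist (c z t) (c z' t')) =
        Real.cosh t * Real.cosh t' -
          Real.sinh t * Real.sinh t' *
            Real.cos (π / Metric.diam (univ : Set Z) * dist z z')) :
    ∃ lam C : ℝ, 0 < lam ∧ 0 ≤ C ∧ ∃ F : X → Y,
      ∀ x x' : X, |lam * dist x x' - dist (F x) (F x')| ≤ C := by
  obtain ⟨D, hD, hvis⟩ := hvisual
  choose ξ hξ using hvis
  obtain ⟨a, c₁, c₂, ha, hc₁, hc₂, hvm⟩ := hvm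
  have ha0 : (0:ℝ) < a := lt_trans one_pos ha
  set ε := Real.log a with hεdef
  have hε : 0 < ε := Real.log_pos ha
  set dZ := Metric.diam (univ : Set Z) with hdZdef
  -- Z is bounded
  have hZb : ∀ z z' : Z, dist z z' ≤ c₂ := by
    intro z z'
    have hgauge : visualGauge a (gpBdry o (φ z) (φ z')) ≤ 1 := by
      unfold visualGauge
      split
      · exact zero_le_one
      · rw [← ENNReal.ofReal_one]
        exact ENNReal.ofReal_le_ofReal
          (Real.rpow_le_one_of_one_le_of_nonpos ha.le (neg_nonpos.mpr ENNReal.toReal_nonneg))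
    have h := (hvm z z').2.trans (mul_le_mul_right hgauge _)
    rw [mul_one, edist_dist] at h
    exact (ENNReal.ofReal_le_ofReal_iff hc₂.le).1 h
  have hbdd : Bornology.IsBounded (univ : Set Z) :=
    Metric.isBounded_iff.2 ⟨c₂, fun {z} _ {z'} _ => hZb z z'⟩
  have hdZ0 : 0 ≤ dZ := Metric.diam_nonneg
  set μ := π / dZ with hμdef
  have hμ0 : 0 ≤ μ := div_nonneg Real.pi_pos.le hdZ0
  set c₂' := c₂ * a ^ (D + 2*δ) with hc₂'def
  have hc₂'0 : 0 < c₂' := mul_pos hc₂ (Real.rpow_pos_of_pos ha0 _)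
  set c₁' := c₁ * a ^ (-(2*δ)) with hc₁'def
  have hc₁'0 : 0 < c₁' := mul_pos hc₁ (Real.rpow_pos_of_pos ha0 _)
  set Kup := (μ * c₂')^2 with hKupdef
  have hKup0 : 0 ≤ Kup := sq_nonneg _
  set Klo := μ^2 * c₁'^2 / (8 * π^2) with hKlodef
  set C₁ := Real.log (2 * (1 + Kup/8)) with hC₁def
  have hC₁ : 0 ≤ C₁ := Real.log_nonneg (by nlinarith)
  set C₂ := 2*ε*(D+2*δ) + 2 with hC₂def
  have hC₂ : 0 ≤ C₂ := by positivity
  set C₃ := max 0 (-Real.log Klo) with hC₃def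
  have hC₃ : 0 ≤ C₃ := le_max_left _ _
  refine ⟨ε, C₁ + C₂ + C₃, hε, by linarith,
    fun x => c (φ.symm (ξ x)) (ε * dist x o), ?_⟩
  intro x x'
  set t := ε * dist x o with htdef
  set t' := ε * dist x' o with ht'def
  have ht0 : 0 ≤ t := mul_nonneg hε.le dist_nonneg
  have ht'0 : 0 ≤ t' := mul_nonneg hε.le dist_nonneg
  set p := gromovProd o x x' with hpdef
  have hp0 : 0 ≤ p := gp_nonneg o x x'
  have hpx : p ≤ dist x o := gp_le_left o x x'
  have hpx' : p ≤ dist x' o := by rw [hpdef, gp_comm]; exact gp_le_left o x' x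
  have hpt : ε * p ≤ t := mul_le_mul_of_nonneg_left hpx hε.le
  have hpt' : ε * p ≤ t' := mul_le_mul_of_nonneg_left hpx' hε.le
  set z := φ.symm (ξ x) with hzdef
  set z' := φ.symm (ξ x') with hz'def
  set sb := dist z z' with hsbdef
  have hsb0 : 0 ≤ sb := dist_nonneg
  set dF := dist (c z t) (c z' t') with hdFdef
  have hdF0 : 0 ≤ dF := dist_nonneg
  set k := μ * sb with hkdef
  have hk0 : 0 ≤ k := mul_nonneg hμ0 hsb0
  have hcosh2 : Real.cosh dF = Real.cosh (t - t')
      + Real.sinh t * Real.sinh t' * (1 - Real.cos k) := by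
    have h := hformula z z' t t' ht0 ht'0
    rw [hdFdef, h, Real.cosh_sub]
    ring_nf
    rfl
  have hSnn : 0 ≤ Real.sinh t * Real.sinh t' :=
    mul_nonneg (Real.sinh_nonneg_iff.2 ht0) (Real.sinh_nonneg_iff.2 ht'0)
  have hdFtt' : |t - t'| ≤ dF := by
    have h1 : Real.cosh (t - t') ≤ Real.cosh dF := by
      rw [hcosh2]
      have hnn : 0 ≤ Real.sinh t * Real.sinh t' * (1 - Real.cos k) :=
        mul_nonneg hSnn (by linarith [Real.cos_le_one k])
      linarith
    have h2 := Real.cosh_le_cosh.1 h1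
    rwa [abs_of_nonneg hdF0] at h2
  set m := ε * dist x x' with hmdef
  have hm_eq : m = t + t' - 2 * (ε * p) := by
    rw [hmdef, htdef, ht'def, hpdef]
    unfold gromovProd
    ring
  -- boundary estimates
  have hφz : φ z = ξ x := Equiv.apply_symm_apply φ _
  have hφz' : φ z' = ξ x' := Equiv.apply_symm_apply φ _
  set B := gpBdry o (ξ x) (ξ x') with hBdef
  have hkey := bdry_est hδ hD hhyp (hξ x) (hξ x')
  have hvm' := hvm z z'
  rw [hφz, hφz', ← hBdef] at hvm'
  -- upper bound on sb
  have hsb_up : sb ≤ c₂' * Real.exp (-(ε*p)) := by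
    have hexp : a ^ (-(p - (D+2*δ))) = a^(D+2*δ) * Real.exp (-(ε*p)) := by
      rw [show -(p - (D+2*δ)) = (D+2*δ) + (-p) by ring, Real.rpow_add ha0]
      congr 1
      rw [Real.rpow_def_of_pos ha0, hεdef]
      congr 1
      ring
    rcases eq_or_ne B ⊤ with hB | hB
    · have h := hvm'.2
      rw [hB] at h
      have hg : visualGauge a ⊤ = 0 := by simp [visualGauge]
      rw [hg, mul_zero, nonpos_iff_eq_zero, edist_eq_zero] at h
      have hsz : sb = 0 := by rw [hsbdef, h, dist_self]
      rw [hsz]; positivity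
    · have h1 : p - (D + 2*δ) ≤ B.toReal :=
        (ENNReal.ofReal_le_iff_le_toReal hB).1 hkey.1
      have h2 : sb ≤ c₂ * a ^ (-B.toReal) := by
        have h := hvm'.2
        have hg : visualGauge a B = ENNReal.ofReal (a ^ (-B.toReal)) := if_neg hB
        rw [hg, edist_dist, ← ENNReal.ofReal_mul hc₂.le] at h
        exact (ENNReal.ofReal_le_ofReal_iff
          (mul_nonneg hc₂.le (Real.rpow_nonneg ha0.le _))).1 h
      calc sb ≤ c₂ * a ^ (-B.toReal) := h2
        _ ≤ c₂ * a ^ (-(p - (D+2*δ))) := by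
            have := Real.rpow_le_rpow_of_exponent_le ha.le (neg_le_neg h1)
            exact mul_le_mul_of_nonneg_left this hc₂.le
        _ = c₂' * Real.exp (-(ε*p)) := by rw [hexp, hc₂'def]; ring
  -- upper bound on dF
  have hdF_up : dF ≤ m + C₁ := by
    have hkup : k ≤ μ * c₂' * Real.exp (-(ε*p)) := by
      rw [hkdef]
      calc μ * sb ≤ μ * (c₂' * Real.exp (-(ε*p))) := mul_le_mul_of_nonneg_left hsb_up hμ0
        _ = μ * c₂' * Real.exp (-(ε*p)) := by ring
    have h := exp_upper_est ht0 ht'0 (mul_nonneg hε.le hp0) hpt hpt' hk0 hkup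
      (mul_nonneg hμ0 hc₂'0.le) hm_eq hdF0 hcosh2
    rw [hC₁def, hKupdef]
    exact h
  -- lower bound on dF
  have habs : |t - t'| = t + t' - 2 * min t t' := by
    rcases le_total t t' with h | h
    · rw [abs_of_nonpos (by linarith), min_eq_left h]; ring
    · rw [abs_of_nonneg (by linarith), min_eq_right h]; ring
  have hdF_low : m - (C₂ + C₃) ≤ dF := by
    by_cases hcase : B ≤ ENNReal.ofReal (p + 2*δ)
    · by_cases hsmall : min t t' ≤ 1
      · have hstep : t + t' - 2 ≤ dF := by
          rw [habs] at hdFtt'; linarith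
        have hm2 : m ≤ t + t' := by
          have := mul_nonneg hε.le hp0
          rw [hm_eq]; linarith
        have h2 : (2:ℝ) ≤ C₂ + C₃ := by
          have hnn := mul_nonneg hε.le (show (0:ℝ) ≤ D + 2*δ by linarith)
          rw [hC₂def]; linarith
        linarith
      · push_neg at hsmall
        have ht1 : 1 < t := lt_of_lt_of_le hsmall (min_le_left _ _)
        have ht'1 : 1 < t' := lt_of_lt_of_le hsmall (min_le_right _ _)
        have hBtop : B ≠ ⊤ := (hcase.trans_lt ENNReal.ofReal_lt_top).ne
        have hBr : B.toReal ≤ p + 2*δ :=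
          ENNReal.toReal_le_of_le_ofReal (by linarith) hcase
        have hsb_low : c₁' * Real.exp (-(ε*p)) ≤ sb := by
          have h := hvm'.1
          have hg : visualGauge a B = ENNReal.ofReal (a ^ (-B.toReal)) := if_neg hBtop
          rw [hg, edist_dist, ← ENNReal.ofReal_mul hc₁.le] at h
          have h2 : c₁ * a ^ (-B.toReal) ≤ sb :=
            (ENNReal.ofReal_le_ofReal_iff hsb0).1 h
          have h3 : c₁' * Real.exp (-(ε*p)) ≤ c₁ * a ^ (-B.toReal) := by
            have hmono := Real.rpow_le_rpow_of_exponent_le ha.le (neg_le_neg hBr)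
            have hexp : a ^ (-(p + 2*δ)) = a^(-(2*δ)) * Real.exp (-(ε*p)) := by
              rw [show -(p + 2*δ) = (-(2*δ)) + (-p) by ring, Real.rpow_add ha0]
              congr 1
              rw [Real.rpow_def_of_pos ha0, hεdef]
              congr 1
              ring
            calc c₁' * Real.exp (-(ε*p)) = c₁ * a ^ (-(p + 2*δ)) := by
                  rw [hexp, hc₁'def]; ring
              _ ≤ c₁ * a ^ (-B.toReal) := mul_le_mul_of_nonneg_left hmono hc₁.le
          linarith
        have hsbpos : 0 < sb := lt_of_lt_of_le (by positivity) hsb_low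
        have hsbdZ : sb ≤ dZ := Metric.dist_le_diam_of_mem hbdd trivial trivial
        have hdZpos : 0 < dZ := lt_of_lt_of_le hsbpos hsbdZ
        have hμpos : 0 < μ := div_pos Real.pi_pos hdZpos
        have hkπ : k ≤ π := by
          rw [hkdef, hμdef]
          calc π / dZ * sb ≤ π / dZ * dZ :=
                mul_le_mul_of_nonneg_left hsbdZ (by positivity)
            _ = π := div_mul_cancel₀ π hdZpos.ne'
        have hklow : μ * c₁' * Real.exp (-(ε*p)) ≤ k := by
          rw [hkdef]
          calc μ * c₁' * Real.exp (-(ε*p)) = μ * (c₁' * Real.exp (-(ε*p))) := by ring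
            _ ≤ μ * sb := mul_le_mul_of_nonneg_left hsb_low hμ0
        have h := exp_lower_est ht1.le ht'1.le (mul_nonneg hε.le hp0) hk0 hkπ hklow
          (mul_pos hμpos hc₁'0) hm_eq hdF0 hcosh2
        have hKloeq : Klo = (μ*c₁')^2/(8*π^2) := by rw [hKlodef]; ring
        have hml : m + Real.log Klo ≤ dF := by rw [hKloeq]; exact h
        have hC₃' : -C₃ ≤ Real.log Klo := by
          rw [hC₃def]
          have := le_max_right (0:ℝ) (-Real.log Klo)
          linarith
        linarith
    · push_neg at hcase
      have hkey2 := hkey.2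
      have hmin : min (dist x o) (dist x' o) ≤ p + 2*δ + D := by
        rcases min_le_iff.1 hkey2 with h | h
        · have : dist x o - D ≤ p + 2*δ :=
            (ENNReal.ofReal_le_ofReal_iff (by linarith)).1 h
          calc min (dist x o) (dist x' o) ≤ dist x o := min_le_left _ _
            _ ≤ p + 2*δ + D := by linarith
        · rcases min_le_iff.1 h with h' | h'
          · exact absurd h' (not_le.2 hcase)
          · have : dist x' o - D ≤ p + 2*δ :=
              (ENNReal.ofReal_le_ofReal_iff (by linarith)).1 h'
            calc min (dist x o) (dist x' o) ≤ dist x' o := min_le_right _ _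
              _ ≤ p + 2*δ + D := by linarith
      have hmint : min t t' ≤ ε * (p + 2*δ + D) := by
        rcases le_total (dist x o) (dist x' o) with h | h
        · have h2 : dist x o ≤ p + 2*δ + D := by
            rw [min_eq_left h] at hmin; exact hmin
          calc min t t' ≤ t := min_le_left _ _
            _ ≤ ε * (p + 2*δ + D) := by
                rw [htdef]; exact mul_le_mul_of_nonneg_left h2 hε.le
        · have h2 : dist x' o ≤ p + 2*δ + D := by
            rw [min_eq_right h] at hmin; exact hmin
          calc min t t' ≤ t' := min_le_right _ _
            _ ≤ ε * (p + 2*δ + D) := by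
                rw [ht'def]; exact mul_le_mul_of_nonneg_left h2 hε.le
      have hstep : t + t' - 2 * (ε * (p + 2*δ + D)) ≤ dF := by
        rw [habs] at hdFtt'; linarith
      have hgoal : m - C₂ ≤ dF := by
        rw [hm_eq, hC₂def]
        linarith
      linarith
  have habs2 : |m - dF| ≤ C₁ + C₂ + C₃ := by
    rw [abs_le]
    constructor
    · linarith
    · linarith
  exact habs2
end
end
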